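/- arXiv:1208.0151 — 10 statements merged into one kernel-verified Lean document; each statement's English description precedes it below -/
import Mathlib

section
/- Let T be a measure-preserving transformation of a probability space (E, ℰ, π) and K a regular conditional distribution of X given T(X). For B ∈ ℰ, define U(B) = ⋃_{k∈ℕ} T^{-k}(B), R(B) = limsup_{k→∞} T^{-k}(B), and A(B) = {x ∈ E : ∃ n, K^n(x,B) > 0}. Then π is invariant for K, U(B) = R(B) π-almost surely, and A(B) ⊆ U(B) π-almost surely. -/
open MeasureTheory ProbabilityTheory

/-- Iterated (n-step) transition kernel. -/
noncomputable def kpow {E : Type*} [MeasurableSpace E] (K : Kernel E E) : ℕ → Kernel E E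
  | 0 => Kernel.id
  | n + 1 => (kpow K n).comp K

/-! Let `C = ⋃ k, T^[k] ⁻¹' B`. Then `T ⁻¹' C ⊆ C`, and since `T` preserves the finite measure `π`
the difference `C \ T^[n] ⁻¹' C` is null for every `n`: almost every orbit that enters `C` stays
in it, i.e. visits `B` infinitely often. Because `K` reverses `T` (the law of `(T x, x)` is
`π ⊗ₘ K`), the case `n = 1` says that from almost every point outside `C` the kernel `K` almost
surely stays outside `C`. As `π` is `K`-invariant, this propagates to every iterate `K^n`, which
therefore gives no mass to `B ⊆ C` from almost every point outside `C`. -/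

theorem preimage_iterate_iUnion_preimage_iterate_subset {E : Type*} (T : E → E) (B : Set E)
    (n : ℕ) :
    T^[n] ⁻¹' (⋃ k, T^[k] ⁻¹' B) ⊆ ⋃ k, T^[k] ⁻¹' B := by
  simp only [Set.preimage_iUnion, ← Set.preimage_comp, ← Function.iterate_add]
  exact Set.iUnion_subset fun k ↦ Set.subset_iUnion (fun j ↦ T^[j] ⁻¹' B) (k + n)

section

variable {E : Type*} [MeasurableSpace E] {μ : Measure E}

theorem MeasureTheory.MeasurePreserving.ae_mem_imp_mem_of_preimage_subset [IsFiniteMeasure μ]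
    {T : E → E} (hT : MeasurePreserving T μ μ) {C : Set E} (hC : NullMeasurableSet C μ)
    (hTC : T ⁻¹' C ⊆ C) : ∀ᵐ x ∂μ, x ∈ C → T x ∈ C := by
  have : μ (C \ T ⁻¹' C) = 0 := by
    rw [measure_sdiff hTC (hC.preimage hT.quasiMeasurePreserving) (measure_ne_top _ _),
      hT.measure_preimage hC, tsub_self]
  exact ae_iff.2 (measure_mono_null (fun x hx ↦ Classical.not_imp.1 hx) this)

theorem MeasureTheory.MeasurePreserving.iUnion_preimage_iterate_ae_eq_frequently
    [IsFiniteMeasure μ] {T : E → E} (hT : MeasurePreserving T μ μ) {B : Set E}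
    (hB : MeasurableSet B) :
    (⋃ k : ℕ, T^[k] ⁻¹' B : Set E) =ᵐ[μ] {x : E | ∀ n : ℕ, ∃ k ≥ n, T^[k] x ∈ B} := by
  have hC : MeasurableSet (⋃ k : ℕ, T^[k] ⁻¹' B) :=
    .iUnion fun k ↦ (hT.measurable.iterate k) hB
  have hstay : ∀ᵐ x ∂μ, ∀ n, x ∈ ⋃ k, T^[k] ⁻¹' B → T^[n] x ∈ ⋃ k, T^[k] ⁻¹' B :=
    ae_all_iff.2 fun n ↦ (hT.iterate n).ae_mem_imp_mem_of_preimage_subset hC.nullMeasurableSet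
      (preimage_iterate_iUnion_preimage_iterate_subset T B n)
  refine Filter.eventuallyEq_set.2 ?_
  filter_upwards [hstay] with x hx
  refine ⟨fun hxC n ↦ ?_, fun hxR ↦ ?_⟩
  · obtain ⟨k, hk⟩ := Set.mem_iUnion.1 (hx n hxC)
    exact ⟨k + n, Nat.le_add_left n k, by rwa [Function.iterate_add_apply]⟩
  · obtain ⟨k, -, hk⟩ := hxR 0
    exact Set.mem_iUnion.2 ⟨k, hk⟩

section Reversal

variable [SFinite μ] {K : Kernel E E} [IsSFiniteKernel K] {f : E → E}

theorem bind_eq_self_of_map_eq_compProd (hf : Measurable f)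
    (hK : μ.map (fun x ↦ (f x, x)) = μ ⊗ₘ K) : μ.bind K = μ := by
  rw [← Measure.snd_compProd, ← hK, Measure.snd_map_prodMk hf, Measure.map_id']

theorem ae_ae_of_map_eq_compProd (hf : Measurable f) (hK : μ.map (fun x ↦ (f x, x)) = μ ⊗ₘ K)
    {p : E → E → Prop} (hp : MeasurableSet {q : E × E | p q.1 q.2})
    (h : ∀ᵐ x ∂μ, p (f x) x) : ∀ᵐ y ∂μ, ∀ᵐ z ∂K y, p y z := by
  have : ∀ᵐ q ∂(μ.map fun x ↦ (f x, x)), p q.1 q.2 :=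
    (ae_map_iff (hf.prodMk measurable_id).aemeasurable hp).2 h
  exact Measure.ae_ae_of_ae_compProd (hK ▸ this)

end Reversal

theorem ae_mem_imp_ae_kpow_mem {K : Kernel E E} (hμ : μ.bind K = μ) {S : Set E}
    (hS : MeasurableSet S) (h : ∀ᵐ y ∂μ, y ∈ S → ∀ᵐ z ∂K y, z ∈ S) (n : ℕ) :
    ∀ᵐ y ∂μ, y ∈ S → ∀ᵐ z ∂kpow K n y, z ∈ S := by
  induction n with
  | zero =>
    refine Filter.Eventually.of_forall fun y hy ↦ ?_
    rw [kpow, Kernel.id_apply]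
    exact (ae_dirac_iff hS).2 hy
  | succ n ih =>
    have ih' : ∀ᵐ y ∂μ, ∀ᵐ w ∂K y, w ∈ S → ∀ᵐ z ∂kpow K n w, z ∈ S :=
      Measure.ae_ae_of_ae_comp (hμ.symm ▸ ih)
    filter_upwards [h, ih'] with y hy hy' hyS
    exact Kernel.ae_comp_of_ae_ae hS ((hy hyS).mp (hy'.mono fun w hw hwS ↦ hw hwS))

end

theorem recurrence_and_accessibility_general
    {E : Type*} [MeasurableSpace E]
    (π : Measure E) [IsProbabilityMeasure π]
    (T : E → E) (hT : MeasurePreserving T π π)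
    (K : Kernel E E) [IsMarkovKernel K]
    (hK : π.map (fun x => (T x, x)) = π ⊗ₘ K)
    (B : Set E) (hB : MeasurableSet B) :
    π.bind K = π ∧
    (⋃ k : ℕ, T^[k] ⁻¹' B : Set E) =ᵐ[π] {x : E | ∀ n : ℕ, ∃ k ≥ n, T^[k] x ∈ B} ∧
    (∀ᵐ x ∂π, (∃ n : ℕ, 0 < kpow K n x B) → x ∈ ⋃ k : ℕ, T^[k] ⁻¹' B) := by
  set C : Set E := ⋃ k : ℕ, T^[k] ⁻¹' B
  have hC : MeasurableSet C := .iUnion fun k ↦ (hT.measurable.iterate k) hB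
  have hbind : π.bind K = π := bind_eq_self_of_map_eq_compProd hT.measurable hK
  have hTC : ∀ᵐ x ∂π, x ∈ C → T x ∈ C :=
    hT.ae_mem_imp_mem_of_preimage_subset hC.nullMeasurableSet
      (preimage_iterate_iUnion_preimage_iterate_subset T B 1)
  have hstep : ∀ᵐ y ∂π, y ∈ Cᶜ → ∀ᵐ z ∂K y, z ∈ Cᶜ := by
    have := ae_ae_of_map_eq_compProd (p := fun y z ↦ z ∈ C → y ∈ C) hT.measurable hK
      ((measurable_snd hC).imp (measurable_fst hC)) hTC
    filter_upwards [this] with y hy hyC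
    exact hy.mono fun z hz hzC ↦ hyC (hz hzC)
  refine ⟨hbind, hT.iUnion_preimage_iterate_ae_eq_frequently hB, ?_⟩
  filter_upwards [ae_all_iff.2 (ae_mem_imp_ae_kpow_mem hbind hC.compl hstep)]
    with x hx ⟨n, hn⟩
  by_contra hxC
  have hnull : kpow K n x C = 0 := measure_eq_zero_iff_ae_notMem.2 (hx n hxC)
  exact hn.ne' (measure_mono_null (Set.subset_iUnion_of_subset 0 subset_rfl) hnull)

/-- with `U B = ⋃ k, (T^[k])⁻¹ B`, `R B = limsup_k (T^[k])⁻¹ B` and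
`A B = {x | ∃ n, K^n(x,B) > 0}`, the measure `π` is invariant for `K`,
`U B = R B` π-a.e. and `A B ⊆ U B` π-a.e. -/
theorem recurrence_and_accessibility
    {E : Type*} [MeasurableSpace E]
    (π : Measure E) [IsProbabilityMeasure π]
    (T : E → E) (hTm : Measurable T) (hT : MeasurePreserving T π π)
    (K : Kernel E E) [IsMarkovKernel K]
    (hK : π.map (fun x => (T x, x)) = π ⊗ₘ K)
    (B : Set E) (hB : MeasurableSet B) :
    π.bind K = π ∧
    (⋃ k : ℕ, T^[k] ⁻¹' B : Set E) =ᵐ[π] {x : E | ∀ n : ℕ, ∃ k ≥ n, T^[k] x ∈ B} ∧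
    (∀ᵐ x ∂π, (∃ n : ℕ, 0 < kpow K n x B) → x ∈ ⋃ k : ℕ, T^[k] ⁻¹' B) :=
  recurrence_and_accessibility_general π T hT K hK B hB
end

section
/- Let T be a measure-preserving transformation of a probability space (E, ℰ, π) with regular conditional kernel K of X given T(X). If a measurable set B is accessible (i.e., some K^n(x,B) > 0) from π-almost every point x, then the forward orbit {T^k(x) : k ∈ ℕ} of π-almost every point x visits B infinitely often. -/
/-!
Let `A` be the set of points whose orbit visits `B` infinitely often. It is measurable and
`A ⊆ T⁻¹ A`. Since `K` is the law of `X` given `T X`, the identity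
`π (T⁻¹ C ∩ D) = ∫⁻ x in C, K x D ∂π` with `C = Aᶜ`, `D = A` gives `K x A = 0` for a.e. `x ∉ A`,
and because `π` is `K`-invariant this propagates to every iterate `Kⁿ`. Poincaré recurrence gives
`π (B \ A) = 0`, hence, by invariance again, `Kⁿ x (B \ A) = 0` a.e. So for a.e. `x ∉ A` we get
`Kⁿ x B = 0` for all `n`, contradicting accessibility.
-/

open MeasureTheory ProbabilityTheory

open Filter Set

namespace ProbabilityTheory.Kernel

variable {E : Type*} [MeasurableSpace E] {μ : Measure E} {κ η : Kernel E E} {A : Set E}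

theorem Invariant.ae_ae {p : E → Prop} (hκ : κ.Invariant μ) (h : ∀ᵐ z ∂μ, p z) :
    ∀ᵐ x ∂μ, ∀ᵐ z ∂κ x, p z :=
  Measure.ae_ae_of_ae_comp (by rwa [hκ.def])

theorem Invariant.ae_apply_eq_zero (hκ : κ.Invariant μ) {s : Set E} (hs : μ s = 0) :
    ∀ᵐ x ∂μ, κ x s = 0 := by
  filter_upwards [hκ.ae_ae (measure_eq_zero_iff_ae_notMem.1 hs)] with x hx
  exact measure_eq_zero_iff_ae_notMem.2 hx

theorem Invariant.kpow (hκ : κ.Invariant μ) : ∀ n, (_root_.kpow κ n).Invariant μ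
  | 0 => Measure.bind_dirac
  | n + 1 => (hκ.kpow n).comp hκ

theorem Invariant.ae_comp_apply_eq_zero (hκ : κ.Invariant μ) (hA : MeasurableSet A)
    (hη : ∀ᵐ x ∂μ, x ∉ A → η x A = 0) (hκA : ∀ᵐ x ∂μ, x ∉ A → κ x A = 0) :
    ∀ᵐ x ∂μ, x ∉ A → (η ∘ₖ κ) x A = 0 := by
  filter_upwards [hκA, hκ.ae_ae hη] with x hκx hηx hx
  rw [comp_apply' _ _ _ hA, ← lintegral_zero]
  refine lintegral_congr_ae ?_
  filter_upwards [measure_eq_zero_iff_ae_notMem.1 (hκx hx), hηx] with z hz hηz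
  exact hηz hz

theorem Invariant.ae_kpow_apply_eq_zero (hκ : κ.Invariant μ) (hA : MeasurableSet A)
    (hκA : ∀ᵐ x ∂μ, x ∉ A → κ x A = 0) : ∀ n, ∀ᵐ x ∂μ, x ∉ A → _root_.kpow κ n x A = 0
  | 0 => ae_of_all _ fun x hx => by simp [_root_.kpow, id_apply, Measure.dirac_apply' _ hA, hx]
  | n + 1 => hκ.ae_comp_apply_eq_zero hA (hκ.ae_kpow_apply_eq_zero hA hκA n) hκA

end ProbabilityTheory.Kernel

section

variable {E : Type*} [MeasurableSpace E] {π : Measure E} [SFinite π] {T : E → E}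
  {K : Kernel E E} [IsSFiniteKernel K]

theorem invariant_of_map_eq_compProd (hT : Measurable T)
    (hK : π.map (fun x => (T x, x)) = π ⊗ₘ K) : K.Invariant π := by
  rw [Kernel.Invariant, ← Measure.snd_compProd, ← hK, Measure.snd_map_prodMk hT, Measure.map_id']

theorem measure_preimage_inter_eq_setLIntegral (hT : Measurable T)
    (hK : π.map (fun x => (T x, x)) = π ⊗ₘ K) {C D : Set E} (hC : MeasurableSet C)
    (hD : MeasurableSet D) : π (T ⁻¹' C ∩ D) = ∫⁻ x in C, K x D ∂π := by
  rw [← Measure.compProd_apply_prod hC hD, ← hK,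
    Measure.map_apply (by fun_prop) (hC.prod hD)]
  rfl

theorem ae_apply_eq_zero_of_subset_preimage (hT : Measurable T)
    (hK : π.map (fun x => (T x, x)) = π ⊗ₘ K) {A : Set E} (hA : MeasurableSet A)
    (hAT : A ⊆ T ⁻¹' A) : ∀ᵐ x ∂π, x ∉ A → K x A = 0 := by
  have h : ∫⁻ x in Aᶜ, K x A ∂π = 0 := by
    rw [← measure_preimage_inter_eq_setLIntegral hT hK hA.compl hA, preimage_compl,
      (disjoint_compl_left_iff_subset.2 hAT).inter_eq, measure_empty]
  exact (setLIntegral_eq_zero_iff hA.compl (K.measurable_coe hA)).1 h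

end

theorem limsup_preimage_iterate_subset_preimage {E : Type*} (T : E → E) (B : Set E) :
    limsup (fun k => T^[k] ⁻¹' B) atTop ⊆ T ⁻¹' limsup (fun k => T^[k] ⁻¹' B) atTop := by
  intro x hx
  rw [mem_limsup_iff_frequently_mem, ← map_add_atTop_eq_nat 1, frequently_map] at hx
  exact mem_limsup_iff_frequently_mem.2 hx

theorem measure_diff_limsup_preimage_iterate_eq_zero {E : Type*} [MeasurableSpace E]
    {π : Measure E} [IsFiniteMeasure π] {T : E → E} (hT : MeasurePreserving T π π) {B : Set E}
    (hB : NullMeasurableSet B π) : π (B \ limsup (fun k => T^[k] ⁻¹' B) atTop) = 0 := by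
  refine measure_eq_zero_iff_ae_notMem.2 ?_
  filter_upwards [hT.conservative.ae_mem_imp_frequently_image_mem hB] with x hx ⟨hxB, hxA⟩
  exact hxA (mem_limsup_iff_frequently_mem.2 (hx hxB))

theorem sufficient_condition_for_recurrence_general
    {E : Type*} [MeasurableSpace E]
    (π : Measure E) [IsProbabilityMeasure π]
    (T : E → E) (hT : MeasurePreserving T π π)
    (K : Kernel E E) [IsMarkovKernel K]
    (hK : π.map (fun x => (T x, x)) = π ⊗ₘ K)
    (B : Set E) (hB : MeasurableSet B)
    (hacc : ∀ᵐ x ∂π, ∃ n : ℕ, 0 < kpow K n x B) :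
    ∀ᵐ x ∂π, ∀ n : ℕ, ∃ k ≥ n, T^[k] x ∈ B := by
  set A := limsup (fun k => T^[k] ⁻¹' B) atTop
  have hA : MeasurableSet A :=
    MeasurableSet.measurableSet_limsup fun k => hT.measurable.iterate k hB
  have hinv : K.Invariant π := invariant_of_map_eq_compProd hT.measurable hK
  have hAc : ∀ n, ∀ᵐ x ∂π, x ∉ A → kpow K n x A = 0 :=
    hinv.ae_kpow_apply_eq_zero hA <| ae_apply_eq_zero_of_subset_preimage hT.measurable hK hA <|
      limsup_preimage_iterate_subset_preimage T B
  have hBA : ∀ n, ∀ᵐ x ∂π, kpow K n x (B \ A) = 0 := fun n =>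
    (hinv.kpow n).ae_apply_eq_zero <|
      measure_diff_limsup_preimage_iterate_eq_zero hT hB.nullMeasurableSet
  filter_upwards [hacc, ae_all_iff.2 hAc, ae_all_iff.2 hBA] with x ⟨n, hn⟩ hxA hxBA
  suffices x ∈ A from frequently_atTop.1 (mem_limsup_iff_frequently_mem.1 this)
  by_contra hx
  refine hn.ne' (measure_mono_null ?_ (measure_union_null (hxA n hx) (hxBA n)))
  rw [union_sdiff_self]
  exact subset_union_right

/-- sufficient condition for recurrence.  If `B` is accessible (for the
chain with kernel `K`, a regular conditional distribution of `X` given `T X`) from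
π-almost every point, then the forward orbit of π-almost every point visits `B`
infinitely often. -/
theorem sufficient_condition_for_recurrence
    {E : Type*} [MeasurableSpace E]
    (π : Measure E) [IsProbabilityMeasure π]
    (T : E → E) (hTm : Measurable T) (hT : MeasurePreserving T π π)
    (K : Kernel E E) [IsMarkovKernel K]
    (hK : π.map (fun x => (T x, x)) = π ⊗ₘ K)
    (B : Set E) (hB : MeasurableSet B)
    (hacc : ∀ᵐ x ∂π, ∃ n : ℕ, 0 < kpow K n x B) :
    ∀ᵐ x ∂π, ∀ n : ℕ, ∃ k ≥ n, T^[k] x ∈ B :=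
  sufficient_condition_for_recurrence_general π T hT K hK B hB hacc
end

section
/- Let K be a transition kernel on (E, ℰ) with invariant probability measure π, and let B₀, B₁, B₂ ∈ ℰ have positive π-measure. If B₂ is accessible (with positive probability in finitely many steps of the K-chain) from π-almost every point of B₁, and B₁ is accessible from π-almost every point of B₀, then B₂ is accessible from π-almost every point of B₀. -/
/-!
Points of `B₁` that cannot reach `B₂` form a `π`-null set. Since `π` is invariant under every
`K ^ m`, for `π`-a.e. `x` each `m`-step law `K ^ m x` also ignores that null set. Hence if `x`
reaches `B₁` in `m` steps, `K ^ m x` charges the set of points that reach `B₂` in some fixed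
number `k` of steps, and Chapman–Kolmogorov gives `K ^ (m + k) x B₂ > 0`.
-/

open MeasureTheory ProbabilityTheory

lemma kpow_eq_pow {E : Type*} [MeasurableSpace E] (K : Kernel E E) : ∀ n, kpow K n = K ^ n
  | 0 => (pow_zero K).symm
  | n + 1 => by rw [kpow, kpow_eq_pow K n, pow_succ]; rfl

namespace ProbabilityTheory.Kernel

variable {α : Type*} [MeasurableSpace α] {κ : Kernel α α}

lemma Invariant.pow {μ : Measure α} (hκ : κ.Invariant μ) : ∀ n, (κ ^ n).Invariant μ
  | 0 => Measure.id_comp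
  | n + 1 => by rw [pow_succ]; exact (hκ.pow n).comp hκ

lemma Invariant.ae_ae_of_ae {μ : Measure α} (hκ : κ.Invariant μ) {p : α → Prop}
    (h : ∀ᵐ y ∂μ, p y) : ∀ᵐ x ∂μ, ∀ᵐ y ∂κ x, p y :=
  Measure.ae_ae_of_ae_bind κ.aemeasurable (by rwa [hκ.def])

lemma pow_add_apply_pos {m k : ℕ} {x : α} {s : Set α} (hs : MeasurableSet s)
    (h : 0 < (κ ^ m) x {y | 0 < (κ ^ k) y s}) : 0 < (κ ^ (m + k)) x s := by
  rw [pow_add_apply_eq_lintegral _ _ _ _ hs, lintegral_pos_iff_support ((κ ^ k).measurable_coe hs)]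
  simpa [Function.support, pos_iff_ne_zero] using h

lemma exists_pow_apply_pos_of_ae {x : α} {s t : Set α} (ht : MeasurableSet t) {m : ℕ}
    (hs : 0 < (κ ^ m) x s) (h : ∀ᵐ y ∂(κ ^ m) x, y ∈ s → ∃ k, 0 < (κ ^ k) y t) :
    ∃ n, 0 < (κ ^ n) x t := by
  have hreach : 0 < (κ ^ m) x (⋃ k, {y | 0 < (κ ^ k) y t}) :=
    hs.trans_le (measure_mono_ae (h.mono fun y hy hys => Set.mem_iUnion.2 (hy hys)))
  obtain ⟨k, hk⟩ : ∃ k, 0 < (κ ^ m) x {y | 0 < (κ ^ k) y t} := by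
    simpa [pos_iff_ne_zero, measure_iUnion_null_iff] using hreach
  exact ⟨m + k, pow_add_apply_pos ht hk⟩

end ProbabilityTheory.Kernel

theorem successive_accessibilities_general
    {E : Type*} [MeasurableSpace E]
    (π : Measure E)
    (K : Kernel E E)
    (hinv : π.bind K = π)
    (B₀ B₁ B₂ : Set E)
    (h₂ : MeasurableSet B₂)
    (h12 : ∀ᵐ x ∂π, x ∈ B₁ → ∃ n : ℕ, 0 < kpow K n x B₂)
    (h01 : ∀ᵐ x ∂π, x ∈ B₀ → ∃ n : ℕ, 0 < kpow K n x B₁) :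
    ∀ᵐ x ∂π, x ∈ B₀ → ∃ n : ℕ, 0 < kpow K n x B₂ := by
  simp only [kpow_eq_pow] at h12 h01 ⊢
  have h12_along : ∀ᵐ x ∂π, ∀ m, ∀ᵐ y ∂(K ^ m) x, y ∈ B₁ → ∃ k, 0 < (K ^ k) y B₂ :=
    ae_all_iff.2 fun m => (Kernel.Invariant.pow hinv m).ae_ae_of_ae h12
  filter_upwards [h01, h12_along] with x hx₁ hx₂ hx₀
  obtain ⟨m, hm⟩ := hx₁ hx₀
  exact Kernel.exists_pow_apply_pos_of_ae h₂ hm (hx₂ m)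

/-- successive accessibilities: if `B₂` is accessible from π-a.e. point
of `B₁` and `B₁` is accessible from π-a.e. point of `B₀`, then `B₂` is accessible
from π-a.e. point of `B₀`. -/
theorem successive_accessibilities
    {E : Type*} [MeasurableSpace E]
    (π : Measure E) [IsProbabilityMeasure π]
    (K : Kernel E E) [IsMarkovKernel K]
    (hinv : π.bind K = π)
    (B₀ B₁ B₂ : Set E)
    (h₀ : MeasurableSet B₀) (h₁ : MeasurableSet B₁) (h₂ : MeasurableSet B₂)
    (hπ₀ : 0 < π B₀) (hπ₁ : 0 < π B₁) (hπ₂ : 0 < π B₂)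
    (h12 : ∀ᵐ x ∂π, x ∈ B₁ → ∃ n : ℕ, 0 < kpow K n x B₂)
    (h01 : ∀ᵐ x ∂π, x ∈ B₀ → ∃ n : ℕ, 0 < kpow K n x B₁) :
    ∀ᵐ x ∂π, x ∈ B₀ → ∃ n : ℕ, 0 < kpow K n x B₂ :=
  successive_accessibilities_general π K hinv B₀ B₁ B₂ h₂ h12 h01
end

section
/- Let K be a transition kernel on (E, ℰ) with invariant probability measure π, and let (X_n) be the canonical Markov chain with kernel K and initial law π. For any measurable set B₁, if τ₁ is the hitting time of B₁, then the law of X_{τ₁} under P^π conditioned on {τ₁ < ∞} is absolutely continuous with respect to π. -/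
/-!
Started from the invariant law `π`, every `X n` has law `π`. The hitting position is, pointwise,
one of the `X n`, so it lies in a `π`-null set `s` only on the countable union of the `P`-null
events `{X n ∈ s}`; conditioning on `{τ₁ < ∞}` cannot charge a `P`-null event.
-/

open MeasureTheory ProbabilityTheory

namespace MeasureTheory.Measure

variable {α β γ : Type*} [MeasurableSpace α] [MeasurableSpace β] [MeasurableSpace γ]

lemma comap_comp_eq_comp_map (μ : Measure α) (κ : Kernel β γ) {g : α → β} (hg : Measurable g) :
    κ.comap g hg ∘ₘ μ = κ ∘ₘ μ.map g := by
  rw [← Kernel.comp_deterministic_eq_comap, ← comp_assoc, deterministic_comp_eq_map]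

/-- No measurability of `f` is needed: a non-measurable function pushes `μ` forward to `0`. -/
lemma map_absolutelyContinuous_of_forall_exists_eq {ι : Type*} [Countable ι] {μ : Measure α}
    {ν : Measure β} {X : ι → α → β} {f : α → β} (hX : ∀ i, AEMeasurable (X i) μ)
    (hXν : ∀ i, μ.map (X i) ≪ ν) (hf : ∀ a, ∃ i, f a = X i a) : μ.map f ≪ ν := by
  by_cases hfm : AEMeasurable f μ
  swap
  · rw [map_of_not_aemeasurable hfm]
    exact AbsolutelyContinuous.zero _
  refine AbsolutelyContinuous.mk fun s hs hνs => ?_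
  have hsub : f ⁻¹' s ⊆ ⋃ i, X i ⁻¹' s := fun a ha => by
    obtain ⟨i, hi⟩ := hf a
    exact Set.mem_iUnion.2 ⟨i, by rwa [Set.mem_preimage, ← hi]⟩
  rw [map_apply_of_aemeasurable hfm hs]
  refine measure_mono_null hsub (measure_iUnion_null fun i => ?_)
  rw [← map_apply_of_aemeasurable (hX i) hs]
  exact hXν i hνs

end MeasureTheory.Measure

section MarkovChain

variable {E Ω : Type*} [MeasurableSpace E] [MeasurableSpace Ω] {P : Measure Ω} [SFinite P]
  {K : Kernel E E} [IsSFiniteKernel K] {X : ℕ → Ω → E}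

lemma map_succ_eq_comp_map_of_markov (hX : ∀ n, Measurable (X n)) (n : ℕ)
    (hMarkov : P.map (fun ω => ((fun i : Fin (n + 1) => X i ω), X (n + 1) ω))
        = (P.map (fun ω => fun i : Fin (n + 1) => X i ω)) ⊗ₘ
            (K.comap (fun v : Fin (n + 1) → E => v (Fin.last n)) (measurable_pi_apply _))) :
    P.map (X (n + 1)) = K ∘ₘ P.map (X n) := by
  have hpath : Measurable fun ω => fun i : Fin (n + 1) => X i ω :=
    measurable_pi_lambda _ fun i => hX i
  rw [← Measure.snd_map_prodMk hpath, hMarkov, Measure.snd_compProd,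
    Measure.comap_comp_eq_comp_map, Measure.map_map (measurable_pi_apply _) hpath]
  rfl

lemma map_eq_of_invariant {π : Measure E} (hinv : π.bind K = π) (hX : ∀ n, Measurable (X n))
    (h0 : P.map (X 0) = π)
    (hMarkov : ∀ n : ℕ,
      P.map (fun ω => ((fun i : Fin (n + 1) => X i ω), X (n + 1) ω))
        = (P.map (fun ω => fun i : Fin (n + 1) => X i ω)) ⊗ₘ
            (K.comap (fun v : Fin (n + 1) → E => v (Fin.last n)) (measurable_pi_apply _)))
    (n : ℕ) : P.map (X n) = π := by
  induction n with
  | zero => exact h0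
  | succ n ih => rw [map_succ_eq_comp_map_of_markov hX n (hMarkov n), ih]; exact hinv

end MarkovChain

open scoped Classical in
theorem hitting_position_abs_continuous_general
    {E Ω : Type*} [MeasurableSpace E] [MeasurableSpace Ω]
    (π : Measure E)
    (K : Kernel E E) [IsMarkovKernel K]
    (hinv : π.bind K = π)
    (P : Measure Ω) [IsProbabilityMeasure P]
    (X : ℕ → Ω → E) (hXm : ∀ n, Measurable (X n))
    (h0 : P.map (X 0) = π)
    (hMarkov : ∀ n : ℕ,
      P.map (fun ω => ((fun i : Fin (n + 1) => X i ω), X (n + 1) ω))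
        = (P.map (fun ω => fun i : Fin (n + 1) => X i ω)) ⊗ₘ
            (K.comap (fun v : Fin (n + 1) → E => v (Fin.last n)) (measurable_pi_apply _)))
    (B₁ : Set E) :
    ((P[|{ω | ∃ n : ℕ, X n ω ∈ B₁}]).map
        (fun ω => if h : ∃ n : ℕ, X n ω ∈ B₁ then X (Nat.find h) ω else X 0 ω)) ≪ π := by
  have hlaw := map_eq_of_invariant hinv hXm h0 hMarkov
  refine Measure.map_absolutelyContinuous_of_forall_exists_eq (fun n => (hXm n).aemeasurable)
    (fun n => ?_) fun ω => ?_
  · exact hlaw n ▸ cond_absolutelyContinuous.map (hXm n)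
  · split_ifs
    exacts [⟨_, rfl⟩, ⟨0, rfl⟩]

open scoped Classical in
/-- for a Markov chain `(X n)` with kernel `K` and invariant initial law `π`,
the law of `X τ₁` (where `τ₁` is the hitting time of `B₁`), under `P` conditioned on
`{τ₁ < ∞}`, is absolutely continuous with respect to `π`. -/
theorem hitting_position_abs_continuous
    {E Ω : Type*} [MeasurableSpace E] [MeasurableSpace Ω]
    (π : Measure E) [IsProbabilityMeasure π]
    (K : Kernel E E) [IsMarkovKernel K]
    (hinv : π.bind K = π)
    (P : Measure Ω) [IsProbabilityMeasure P]
    (X : ℕ → Ω → E) (hXm : ∀ n, Measurable (X n))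
    (h0 : P.map (X 0) = π)
    (hMarkov : ∀ n : ℕ,
      P.map (fun ω => ((fun i : Fin (n + 1) => X i ω), X (n + 1) ω))
        = (P.map (fun ω => fun i : Fin (n + 1) => X i ω)) ⊗ₘ
            (K.comap (fun v : Fin (n + 1) → E => v (Fin.last n)) (measurable_pi_apply _)))
    (B₁ : Set E) (hB₁ : MeasurableSet B₁) :
    ((P[|{ω | ∃ n : ℕ, X n ω ∈ B₁}]).map
        (fun ω => if h : ∃ n : ℕ, X n ω ∈ B₁ then X (Nat.find h) ω else X 0 ω)) ≪ π :=
  hitting_position_abs_continuous_general π K hinv P X hXm h0 hMarkov B₁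
end

section
/- For f, g ∈ 𝐖 (continuous functions ℝ₊ → ℝ vanishing at 0) and t, δ > 0, define d_t^{CZ}(f,g) = inf{δ > 0 : Z_{t−δ}(f) ⊆ Z(g) + ]−δ,δ[ and Z_{t−δ}(g) ⊆ Z(f) + ]−δ,δ[} where Z(f) is the zero set of f and Z_s(f) = Z(f) ∩ [0,s]. Then d_t^{CZ}(f,g) < δ if and only if Z_{t−δ}(f) ⊆ Z(g) + ]−δ,δ[ and Z_{t−δ}(g) ⊆ Z(f) + ]−δ,δ[; moreover d_t^{CZ} is a pseudometric (symmetric, vanishing on the diagonal, satisfying the triangle inequality) on 𝐖. -/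
open MeasureTheory

/-- The zero set of a path (only nonnegative times are considered). -/
def zeroSet (f : ℝ → ℝ) : Set ℝ := {s : ℝ | 0 ≤ s ∧ f s = 0}

/-- The zero-control pseudometric:
`dCZ t f g = inf {δ > 0 : Z_{t-δ}(f) ⊆ Z(g) + ]-δ,δ[ and Z_{t-δ}(g) ⊆ Z(f) + ]-δ,δ[}`. -/
noncomputable def dCZ (t : ℝ) (f g : ℝ → ℝ) : ℝ :=
  sInf {δ : ℝ | 0 < δ ∧
    (∀ s, 0 ≤ s → s ≤ t - δ → f s = 0 → ∃ z ∈ zeroSet g, |s - z| < δ) ∧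
    (∀ s, 0 ≤ s → s ≤ t - δ → g s = 0 → ∃ z ∈ zeroSet f, |s - z| < δ)}

namespace CZaux

/-- Auxiliary quantity: `M t f g = sup_{s ∈ Z(f) ∩ [0,t]} min (t - s) (dist (s, Z(g)))`. -/
noncomputable def M (t : ℝ) (f g : ℝ → ℝ) : ℝ :=
  sSup ((fun s => min (t - s) (Metric.infDist s (zeroSet g))) '' (zeroSet f ∩ Set.Icc 0 t))

lemma zeroSet_closed {f : ℝ → ℝ} (hf : Continuous f) : IsClosed (zeroSet f) := by
  have : zeroSet f = Set.Ici (0:ℝ) ∩ f ⁻¹' {0} := by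
    ext s; simp [zeroSet, Set.mem_Ici]
  rw [this]
  exact isClosed_Ici.inter (isClosed_singleton.preimage hf)

lemma zero_mem {f : ℝ → ℝ} (hf0 : f 0 = 0) : (0:ℝ) ∈ zeroSet f := ⟨le_refl 0, hf0⟩

lemma compactK {t : ℝ} {f : ℝ → ℝ} (hf : Continuous f) :
    IsCompact (zeroSet f ∩ Set.Icc 0 t) :=
  isCompact_Icc.inter_left (zeroSet_closed hf)

lemma contF (t : ℝ) (g : ℝ → ℝ) :
    Continuous fun s : ℝ => min (t - s) (Metric.infDist s (zeroSet g)) :=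
  (continuous_const.sub continuous_id).min (Metric.continuous_infDist_pt _)

lemma memK {t : ℝ} {f : ℝ → ℝ} (ht : 0 < t) (hf0 : f 0 = 0) :
    (0:ℝ) ∈ zeroSet f ∩ Set.Icc 0 t :=
  ⟨zero_mem hf0, ⟨le_refl 0, ht.le⟩⟩

lemma M_nonneg {t : ℝ} {f g : ℝ → ℝ} (ht : 0 < t) (hf : Continuous f) (hf0 : f 0 = 0) :
    0 ≤ M t f g := by
  have h0 : (0:ℝ) ≤ min (t - 0) (Metric.infDist 0 (zeroSet g)) :=
    le_min (by linarith) Metric.infDist_nonneg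
  refine h0.trans (le_csSup ((compactK hf).bddAbove_image ((contF t g).continuousOn)) ?_)
  exact Set.mem_image_of_mem _ (memK ht hf0)

lemma condOne_iff {t δ : ℝ} {f g : ℝ → ℝ} (ht : 0 < t)
    (hf : Continuous f) (hf0 : f 0 = 0) (hg0 : g 0 = 0) :
    (∀ s, 0 ≤ s → s ≤ t - δ → f s = 0 → ∃ z ∈ zeroSet g, |s - z| < δ) ↔ M t f g < δ := by
  constructor
  · intro hcond
    obtain ⟨x, hxK, hxmax⟩ := (compactK (t := t) hf).exists_isMaxOn
      ⟨0, memK ht hf0⟩ ((contF t g).continuousOn)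
    have hM : M t f g ≤ min (t - x) (Metric.infDist x (zeroSet g)) := by
      refine csSup_le ⟨_, Set.mem_image_of_mem _ (memK ht hf0)⟩ ?_
      rintro y ⟨s, hs, rfl⟩
      exact hxmax hs
    rcases lt_or_ge (t - x) δ with h | h
    · exact hM.trans_lt ((min_le_left _ _).trans_lt h)
    · obtain ⟨z, hz, hdz⟩ := hcond x hxK.1.1 (by linarith) hxK.1.2
      refine hM.trans_lt ((min_le_right _ _).trans_lt ?_)
      calc Metric.infDist x (zeroSet g) ≤ dist x z := Metric.infDist_le_dist_of_mem hz
        _ < δ := by rwa [Real.dist_eq]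
  · intro hM s hs0 hst hfs
    have hδpos : 0 < δ := lt_of_le_of_lt (M_nonneg ht hf hf0) hM
    have hsK : s ∈ zeroSet f ∩ Set.Icc 0 t := ⟨⟨hs0, hfs⟩, ⟨hs0, by linarith⟩⟩
    have hFs : min (t - s) (Metric.infDist s (zeroSet g)) ≤ M t f g :=
      le_csSup ((compactK hf).bddAbove_image ((contF t g).continuousOn))
        (Set.mem_image_of_mem _ hsK)
    have hinf : Metric.infDist s (zeroSet g) < δ := by
      by_contra hcon
      push_neg at hcon
      have : δ ≤ min (t - s) (Metric.infDist s (zeroSet g)) := le_min (by linarith) hcon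
      linarith [hFs.trans_lt hM]
    obtain ⟨z, hz, hdz⟩ := (Metric.infDist_lt_iff ⟨0, zero_mem hg0⟩).mp hinf
    exact ⟨z, hz, by rwa [Real.dist_eq] at hdz⟩

lemma dCZ_eq {t : ℝ} {f g : ℝ → ℝ} (ht : 0 < t)
    (hf : Continuous f) (hf0 : f 0 = 0) (hg : Continuous g) (hg0 : g 0 = 0) :
    dCZ t f g = max (M t f g) (M t g f) := by
  have hset : {δ : ℝ | 0 < δ ∧
      (∀ s, 0 ≤ s → s ≤ t - δ → f s = 0 → ∃ z ∈ zeroSet g, |s - z| < δ) ∧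
      (∀ s, 0 ≤ s → s ≤ t - δ → g s = 0 → ∃ z ∈ zeroSet f, |s - z| < δ)} =
      Set.Ioi (max (M t f g) (M t g f)) := by
    ext δ
    simp only [Set.mem_setOf_eq, Set.mem_Ioi, max_lt_iff]
    constructor
    · rintro ⟨_, h1, h2⟩
      exact ⟨(condOne_iff ht hf hf0 hg0).mp h1, (condOne_iff ht hg hg0 hf0).mp h2⟩
    · rintro ⟨h1, h2⟩
      exact ⟨lt_of_le_of_lt (M_nonneg ht hf hf0) h1,
        (condOne_iff ht hf hf0 hg0).mpr h1, (condOne_iff ht hg hg0 hf0).mpr h2⟩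
  rw [dCZ, hset, csInf_Ioi]

lemma M_self_eq_zero {t : ℝ} {f : ℝ → ℝ} (ht : 0 < t) (hf : Continuous f) (hf0 : f 0 = 0) :
    M t f f = 0 := by
  refine le_antisymm ?_ (M_nonneg ht hf hf0)
  refine csSup_le ⟨_, Set.mem_image_of_mem _ (memK ht hf0)⟩ ?_
  rintro y ⟨s, hs, rfl⟩
  have h0 : Metric.infDist s (zeroSet f) = 0 := Metric.infDist_zero_of_mem hs.1
  simpa [h0] using min_le_right (t - s) (0:ℝ)

end CZaux

open CZaux in
/-- `dCZ t f g < δ` iff every zero of `f` before `t - δ` is within `δ` of a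
zero of `g` and conversely; moreover `dCZ t` is a pseudometric on `𝐖` (vanishing on the
diagonal, symmetric, triangle inequality). -/
theorem dCZ_lt_iff_and_pseudometric
    (t δ : ℝ) (ht : 0 < t) (hδ : 0 < δ)
    (f g k : ℝ → ℝ)
    (hf : Continuous f) (hf0 : f 0 = 0)
    (hg : Continuous g) (hg0 : g 0 = 0)
    (hk : Continuous k) (hk0 : k 0 = 0) :
    (dCZ t f g < δ ↔
      ((∀ s, 0 ≤ s → s ≤ t - δ → f s = 0 → ∃ z ∈ zeroSet g, |s - z| < δ) ∧
       (∀ s, 0 ≤ s → s ≤ t - δ → g s = 0 → ∃ z ∈ zeroSet f, |s - z| < δ))) ∧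
    dCZ t f f = 0 ∧
    dCZ t f g = dCZ t g f ∧
    dCZ t f k ≤ dCZ t f g + dCZ t g k := by
  have efg := dCZ_eq ht hf hf0 hg hg0
  have egf := dCZ_eq ht hg hg0 hf hf0
  have eff := dCZ_eq ht hf hf0 hf hf0
  have efk := dCZ_eq ht hf hf0 hk hk0
  have egk := dCZ_eq ht hg hg0 hk hk0
  refine ⟨?_, ?_, ?_, ?_⟩
  · rw [efg, max_lt_iff]
    exact and_congr (condOne_iff ht hf hf0 hg0).symm (condOne_iff ht hg hg0 hf0).symm
  · rw [eff, M_self_eq_zero ht hf hf0, max_self]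
  · rw [efg, egf, max_comm]
  · -- triangle inequality
    refine le_of_forall_pos_lt_add fun ε hε => ?_
    set δ₁ := dCZ t f g + ε / 2 with hδ₁def
    set δ₂ := dCZ t g k + ε / 2 with hδ₂def
    have hd1 : 0 ≤ dCZ t f g := by
      rw [efg]; exact le_max_of_le_left (M_nonneg ht hf hf0)
    have hd2 : 0 ≤ dCZ t g k := by
      rw [egk]; exact le_max_of_le_left (M_nonneg ht hg hg0)
    have hδ₁pos : 0 < δ₁ := by positivity
    have hδ₂pos : 0 < δ₂ := by positivity
    -- conditions at δ₁ between f and g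
    have h1 : M t f g < δ₁ ∧ M t g f < δ₁ := by
      rw [← max_lt_iff, ← efg]; simp [hδ₁def]; linarith
    have h2 : M t g k < δ₂ ∧ M t k g < δ₂ := by
      rw [← max_lt_iff, ← egk]; simp [hδ₂def]; linarith
    have c1 := (condOne_iff (δ := δ₁) ht hf hf0 hg0).mpr h1.1
    have c1' := (condOne_iff (δ := δ₁) ht hg hg0 hf0).mpr h1.2
    have c2 := (condOne_iff (δ := δ₂) ht hg hg0 hk0).mpr h2.1
    have c2' := (condOne_iff (δ := δ₂) ht hk hk0 hg0).mpr h2.2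
    -- compose: condition between f and k at δ₁ + δ₂
    have comp : ∀ (d₁ d₂ : ℝ) (a b c : ℝ → ℝ), 0 < d₂ →
        (∀ s, 0 ≤ s → s ≤ t - d₁ → a s = 0 → ∃ z ∈ zeroSet b, |s - z| < d₁) →
        (∀ s, 0 ≤ s → s ≤ t - d₂ → b s = 0 → ∃ z ∈ zeroSet c, |s - z| < d₂) →
        (∀ s, 0 ≤ s → s ≤ t - (d₁ + d₂) → a s = 0 → ∃ z ∈ zeroSet c, |s - z| < d₁ + d₂) := by
      intro d₁ d₂ a b c hd₂ ha hb s hs0 hst has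
      obtain ⟨z, hz, hdz⟩ := ha s hs0 (by linarith) has
      have hz2 : z ≤ t - d₂ := by
        have : z - s ≤ |s - z| := by rw [abs_sub_comm]; exact le_abs_self _
        linarith
      obtain ⟨w, hw, hdw⟩ := hb z hz.1 hz2 hz.2
      exact ⟨w, hw, lt_of_le_of_lt (abs_sub_le s z w) (by linarith)⟩
    have cfk := comp δ₁ δ₂ f g k hδ₂pos c1 c2
    have ckf' := comp δ₂ δ₁ k g f hδ₁pos c2' c1'
    have ckf : ∀ s, 0 ≤ s → s ≤ t - (δ₁ + δ₂) → k s = 0 →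
        ∃ z ∈ zeroSet f, |s - z| < δ₁ + δ₂ := by
      intro s hs0 hst hks
      obtain ⟨z, hz, hd⟩ := ckf' s hs0 (by linarith) hks
      exact ⟨z, hz, by linarith⟩
    have : dCZ t f k < δ₁ + δ₂ := by
      rw [efk, max_lt_iff]
      exact ⟨(condOne_iff ht hf hf0 hk0).mp cfk, (condOne_iff ht hk hk0 hf0).mp ckf⟩
    calc dCZ t f k < δ₁ + δ₂ := this
      _ = dCZ t f g + dCZ t g k + ε := by ring
end

section
/- Piecewise affine continuous functions vanishing at 0, with rational breakpoints and rational values at breakpoints, are dense in 𝐖 for the CUCZ topology (the topology generated by the uniform-on-compacts pseudometrics d_t^{CU} together with the zero-control pseudometrics d_t^{CZ}). The same holds with nonnegative piecewise affine functions inside 𝐖₊. -/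
open MeasureTheory

/-- The uniform pseudometric on `[0,t]`. -/
noncomputable def dCU (t : ℝ) (f g : ℝ → ℝ) : ℝ :=
  sSup ((fun s => |f s - g s|) '' Set.Icc 0 t)

/-- `g` is continuous, vanishes at `0`, is piecewise affine on `[0,∞)` with rational
subdivision points and rational values at these points, and is constant after the last
subdivision point. -/
def PiecewiseAffineRat (g : ℝ → ℝ) : Prop :=
  ∃ (n : ℕ) (c : Fin (n + 1) → ℚ) (v : Fin (n + 1) → ℚ),
    StrictMono c ∧ c 0 = 0 ∧ v 0 = 0 ∧
    (∀ i : Fin n, ∀ x : ℝ, (c i.castSucc : ℝ) ≤ x → x ≤ (c i.succ : ℝ) →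
      g x = (v i.castSucc : ℝ) +
        ((v i.succ : ℝ) - (v i.castSucc : ℝ)) * (x - (c i.castSucc : ℝ)) /
          ((c i.succ : ℝ) - (c i.castSucc : ℝ))) ∧
    (∀ x : ℝ, (c (Fin.last n) : ℝ) ≤ x → g x = (v (Fin.last n) : ℝ))

/-!
Sample `f` on a rational grid of mesh `q` and interpolate affinely between the samples. Uniform
continuity on `[0, t + 1]` makes the interpolant uniformly close to `f`. The samples are rounded
to rationals that vanish when the sample is `ε`-small and otherwise keep its sign. Then a zero of
`f` forces a vanishing node value nearby, while a zero of the interpolant lies in a cell having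
either an `ε`-small sample, which by compactness of `[0, t]` lies near a zero of `f`, or a sign
change of `f`, which contains a zero of `f` by the intermediate value theorem. Nonnegative samples
round to nonnegative values, so nonnegativity is preserved.
-/

open Set

theorem abs_sub_le_of_mem_uIcc {α : Type*} [AddCommGroup α] [LinearOrder α] [IsOrderedAddMonoid α]
    {a b x y r : α} (hy : y ∈ uIcc a b) (ha : |x - a| ≤ r) (hb : |x - b| ≤ r) : |x - y| ≤ r :=
  mem_Icc_iff_abs_le.2 (uIcc_subset_Icc (mem_Icc_iff_abs_le.1 ha) (mem_Icc_iff_abs_le.1 hb) hy)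

theorem IsCompact.exists_pos_forall_infDist_lt_of_abs_le {X : Type*} [PseudoMetricSpace X]
    {K Z : Set X} {f : X → ℝ} (hK : IsCompact K) (hf : ContinuousOn f K)
    (hZ : ∀ x ∈ K, f x = 0 → x ∈ Z) {δ : ℝ} (hδ : 0 < δ) :
    ∃ ε > 0, ∀ x ∈ K, |f x| ≤ ε → Metric.infDist x Z < δ := by
  have hfar : IsCompact (K ∩ {x | δ ≤ Metric.infDist x Z}) :=
    hK.inter_right (isClosed_le continuous_const (Metric.continuous_infDist_pt Z))
  obtain ⟨m, hm, hbound⟩ := hfar.exists_forall_le' (hf.abs.mono inter_subset_left) (a := 0)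
    fun x hx => abs_pos.2 fun h0 => by
      have hδx : δ ≤ Metric.infDist x Z := hx.2
      linarith [Metric.infDist_zero_of_mem (hZ x hx.1 h0)]
  refine ⟨m / 2, half_pos hm, fun x hx hfx => not_le.1 fun hδx => ?_⟩
  linarith [hbound x ⟨hx, hδx⟩]

theorem exists_pos_forall_exists_mem_zeroSet {f : ℝ → ℝ} (hf : Continuous f) (hf0 : f 0 = 0)
    (t : ℝ) {r : ℝ} (hr : 0 < r) :
    ∃ ε > 0, ∀ y ∈ Icc 0 t, |f y| ≤ ε → ∃ z ∈ zeroSet f, |y - z| < r := by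
  obtain ⟨ε, hε, hnear⟩ := isCompact_Icc.exists_pos_forall_infDist_lt_of_abs_le hf.continuousOn
    (fun x hx h0 => show x ∈ zeroSet f from ⟨hx.1, h0⟩) hr
  exact ⟨ε, hε, fun y hy hfy => by
    have hZ : (zeroSet f).Nonempty := ⟨0, le_rfl, hf0⟩
    simpa only [Real.dist_eq] using (Metric.infDist_lt_iff hZ).1 (hnear y hy hfy)⟩

theorem dCU_le {t r : ℝ} {f g : ℝ → ℝ} (hr : 0 ≤ r) (h : ∀ s ∈ Icc 0 t, |f s - g s| ≤ r) :
    dCU t f g ≤ r :=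
  Real.sSup_le (by rintro _ ⟨s, hs, rfl⟩; exact h s hs) hr

theorem dCZ_le {t r : ℝ} {f g : ℝ → ℝ} (hr : 0 < r)
    (hfg : ∀ s, 0 ≤ s → s ≤ t - r → f s = 0 → ∃ z ∈ zeroSet g, |s - z| < r)
    (hgf : ∀ s, 0 ≤ s → s ≤ t - r → g s = 0 → ∃ z ∈ zeroSet f, |s - z| < r) :
    dCZ t f g ≤ r :=
  csInf_le ⟨0, fun _ hδ => hδ.1.le⟩ ⟨hr, hfg, hgf⟩

/-- Affine interpolation of the values `w k` at the nodes `k * q`, `k ≤ N`, constant after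
`N * q`. -/
noncomputable def gridInterp (q : ℝ) (w : ℕ → ℝ) (N : ℕ) (x : ℝ) : ℝ :=
  let k := min ⌊x / q⌋₊ N
  AffineMap.lineMap (w k) (w (k + 1)) (min (x / q) N - k)

section gridInterp

variable {q x : ℝ} {w : ℕ → ℝ} {N k : ℕ}

theorem gridInterp_natCast_mul (hq : q ≠ 0) (hk : k ≤ N) : gridInterp q w N (k * q) = w k := by
  have hkN : (k : ℝ) ≤ N := by exact_mod_cast hk
  simp [gridInterp, mul_div_cancel_right₀ _ hq, hk, hkN]

theorem gridInterp_of_le (hq : 0 < q) (hx : N * q ≤ x) : gridInterp q w N x = w N := by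
  have hxq : (N : ℝ) ≤ x / q := (le_div_iff₀ hq).2 hx
  simp [gridInterp, Nat.le_floor hxq, hxq]

theorem gridInterp_eq_of_mem_Icc (hq : 0 < q) (hk : k < N) (hx : x ∈ Icc (k * q) ((k + 1) * q)) :
    gridInterp q w N x = AffineMap.lineMap (w k) (w (k + 1)) ((x - k * q) / q) := by
  rcases hx.2.eq_or_lt with rfl | hlt
  · have hend := gridInterp_natCast_mul (w := w) hq.ne' hk
    push_cast at hend
    rw [hend, show ((k : ℝ) + 1) * q - k * q = q by ring, div_self hq.ne',
      AffineMap.lineMap_apply_one]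
  · have hxq : x / q ∈ Ico (k : ℝ) (k + 1) :=
      ⟨(le_div_iff₀ hq).2 hx.1, (div_lt_iff₀ hq).2 hlt⟩
    have hkN : (k : ℝ) + 1 ≤ N := by exact_mod_cast hk
    have hfloor : ⌊x / q⌋₊ = k := Nat.floor_eq_on_Ico k _ hxq
    simp only [gridInterp, hfloor, min_eq_left hk.le, min_eq_left (hxq.2.le.trans hkN)]
    congr 1
    field_simp

theorem exists_gridInterp_mem_uIcc (hq : 0 < q) (hx0 : 0 ≤ x) (hxN : x < N * q) :
    ∃ k < N, x ∈ Ico (k * q) ((k + 1) * q) ∧ gridInterp q w N x ∈ uIcc (w k) (w (k + 1)) := by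
  have hxq : 0 ≤ x / q := div_nonneg hx0 hq.le
  have hk : ⌊x / q⌋₊ < N := (Nat.floor_lt hxq).2 ((div_lt_iff₀ hq).2 hxN)
  have hcell : x ∈ Ico (⌊x / q⌋₊ * q) ((⌊x / q⌋₊ + 1) * q) :=
    ⟨(le_div_iff₀ hq).1 (Nat.floor_le hxq), (div_lt_iff₀ hq).1 (Nat.lt_floor_add_one _)⟩
  refine ⟨_, hk, hcell, ?_⟩
  rw [gridInterp_eq_of_mem_Icc hq hk (Ico_subset_Icc_self hcell), ← segment_eq_uIcc]
  have hθ : (x - ⌊x / q⌋₊ * q) / q ∈ Icc (0 : ℝ) 1 := by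
    rw [mem_Icc, div_le_one hq]
    exact ⟨div_nonneg (by linarith [hcell.1]) hq.le, by linarith [hcell.2]⟩
  exact lineMap_mem_segment ℝ _ _ hθ

theorem gridInterp_nonneg (hq : 0 < q) (hw : ∀ k, 0 ≤ w k) (hx : 0 ≤ x) :
    0 ≤ gridInterp q w N x := by
  rcases lt_or_ge x (N * q) with hxN | hxN
  · obtain ⟨k, -, -, hmem⟩ := exists_gridInterp_mem_uIcc (w := w) hq hx hxN
    exact (le_min (hw k) (hw (k + 1))).trans hmem.1
  · exact gridInterp_of_le hq hxN ▸ hw N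

end gridInterp

theorem piecewiseAffineRat_gridInterp {q : ℚ} (hq : 0 < q) {w : ℕ → ℚ} (hw0 : w 0 = 0) (N : ℕ) :
    PiecewiseAffineRat (gridInterp q (fun k => w k) N) := by
  have hq' : (0 : ℝ) < q := by exact_mod_cast hq
  refine ⟨N, fun i => i * q, fun i => w i, fun i j hij => ?_, by simp, by simpa using hw0, ?_, ?_⟩
  · exact mul_lt_mul_of_pos_right (by exact_mod_cast hij) hq
  · intro i x h₁ h₂
    simp only [Fin.val_castSucc, Fin.val_succ] at h₁ h₂ ⊢
    push_cast at h₁ h₂ ⊢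
    rw [gridInterp_eq_of_mem_Icc hq' i.isLt ⟨h₁, h₂⟩, AffineMap.lineMap_apply_ring']
    field_simp
    ring
  · intro x hx
    exact gridInterp_of_le hq' (by exact_mod_cast hx)

structure IsSignRounding (ε a r : ℝ) : Prop where
  abs_sub_le : |r - a| ≤ ε
  eq_zero_of_abs_le : |a| ≤ ε → r = 0
  pos_of_pos : 0 < r → 0 < a
  neg_of_neg : r < 0 → a < 0

namespace IsSignRounding

variable {ε a b r s : ℝ}

theorem exists_rat (hε : 0 < ε) (a : ℝ) : ∃ r : ℚ, IsSignRounding ε a r := by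
  by_cases ha : |a| ≤ ε
  · exact ⟨0, by simpa using ha, fun _ => Rat.cast_zero, by simp, by simp⟩
  rcases lt_abs.1 (not_le.1 ha) with ha' | ha'
  · obtain ⟨r, h₁, h₂⟩ := exists_rat_btwn (sub_lt_self a hε)
    exact ⟨r, abs_le.2 ⟨by linarith, by linarith⟩, fun h => absurd h ha, fun _ => by linarith,
      fun h => by linarith⟩
  · obtain ⟨r, h₁, h₂⟩ := exists_rat_btwn (lt_add_of_pos_right a hε)
    exact ⟨r, abs_le.2 ⟨by linarith, by linarith⟩, fun h => absurd h ha, fun h => by linarith,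
      fun _ => by linarith⟩

theorem nonneg (h : IsSignRounding ε a r) (ha : 0 ≤ a) : 0 ≤ r :=
  not_lt.1 fun hr => (h.neg_of_neg hr).not_ge ha

theorem abs_le_of_eq_zero (h : IsSignRounding ε a r) (hr : r = 0) : |a| ≤ ε := by
  simpa [hr] using h.abs_sub_le

theorem zero_mem_uIcc (ha : IsSignRounding ε a r) (hb : IsSignRounding ε b s) (hr : r ≠ 0)
    (hs : s ≠ 0) (h : 0 ∈ uIcc r s) : 0 ∈ uIcc a b := by
  rcases mem_uIcc.1 h with ⟨hr', hs'⟩ | ⟨hs', hr'⟩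
  · exact mem_uIcc.2 (Or.inl ⟨(ha.neg_of_neg (hr'.lt_of_ne hr)).le,
      (hb.pos_of_pos (hs'.lt_of_ne' hs)).le⟩)
  · exact mem_uIcc.2 (Or.inr ⟨(hb.neg_of_neg (hs'.lt_of_ne hs)).le,
      (ha.pos_of_pos (hr'.lt_of_ne' hr)).le⟩)

end IsSignRounding

section SampledInterpolation

variable {f : ℝ → ℝ} {w : ℕ → ℝ} {N : ℕ} {q ε t s : ℝ}
  (hq : 0 < q) (htN : t < N * q)
  (hosc : ∀ x ∈ Icc 0 (t + 1), ∀ y ∈ Icc 0 (t + 1), dist x y ≤ q → dist (f x) (f y) ≤ ε)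
  (hw : ∀ k : ℕ, IsSignRounding ε (f (k * q)) (w k))
include hq htN hw

include hosc in
theorem abs_sub_gridInterp_le (hq1 : q ≤ 1) (hs : s ∈ Icc 0 t) :
    |f s - gridInterp q w N s| ≤ 2 * ε := by
  obtain ⟨k, -, ⟨hk₁, hk₂⟩, hmem⟩ := exists_gridInterp_mem_uIcc hq hs.1 (hs.2.trans_lt htN)
  have hnode : ∀ j : ℕ, |s - j * q| ≤ q → |f s - w j| ≤ 2 * ε := fun j hj => by
    have hjq : (j : ℝ) * q ∈ Icc 0 (t + 1) := ⟨by positivity, by linarith [abs_le.1 hj, hs.2]⟩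
    have hosc_j := hosc s ⟨hs.1, by linarith [hs.2]⟩ _ hjq hj
    rw [Real.dist_eq] at hosc_j
    calc |f s - w j| ≤ |f s - f (j * q)| + |f (j * q) - w j| := abs_sub_le _ _ _
      _ ≤ ε + ε := add_le_add hosc_j (abs_sub_comm (w j) _ ▸ (hw j).abs_sub_le)
      _ = 2 * ε := by ring
  refine abs_sub_le_of_mem_uIcc hmem (hnode k ?_) (hnode (k + 1) ?_) <;>
    rw [abs_le] <;> push_cast <;> constructor <;> linarith [hk₁, hk₂]

include hosc in
theorem exists_mem_zeroSet_gridInterp_near (hs0 : 0 ≤ s) (hst : s ≤ t) (hfs : f s = 0) :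
    ∃ z ∈ zeroSet (gridInterp q w N), |s - z| < q := by
  obtain ⟨k, hk, ⟨hk₁, hk₂⟩, -⟩ := exists_gridInterp_mem_uIcc (w := w) hq hs0 (hst.trans_lt htN)
  refine ⟨k * q, ⟨by positivity, ?_⟩, abs_lt.2 ⟨by linarith, by linarith⟩⟩
  rw [gridInterp_natCast_mul hq.ne' hk.le]
  refine (hw k).eq_zero_of_abs_le ?_
  have hosc_k := hosc (k * q) ⟨by positivity, by linarith [hk₁]⟩ s ⟨hs0, by linarith⟩
    (by rw [Real.dist_eq, abs_le]; constructor <;> linarith [hk₁, hk₂])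
  rwa [Real.dist_eq, hfs, sub_zero] at hosc_k

theorem exists_mem_zeroSet_near_of_gridInterp_eq_zero (hf : Continuous f) {r : ℝ} (hr : 0 < r)
    (hnear : ∀ y ∈ Icc 0 t, |f y| ≤ ε → ∃ z ∈ zeroSet f, |y - z| < r)
    (hs0 : 0 ≤ s) (hst : s + q ≤ t) (hgs : gridInterp q w N s = 0) :
    ∃ z ∈ zeroSet f, |s - z| < q + r := by
  obtain ⟨k, -, ⟨hk₁, hk₂⟩, hmem⟩ := exists_gridInterp_mem_uIcc (w := w) hq hs0 (by linarith)
  rw [hgs] at hmem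
  have hnode : ∀ j : ℕ, |s - j * q| ≤ q → w j = 0 → ∃ z ∈ zeroSet f, |s - z| < q + r := by
    intro j hj hwj
    obtain ⟨z, hz, hdz⟩ := hnear (j * q) ⟨by positivity, by linarith [abs_le.1 hj]⟩
      ((hw j).abs_le_of_eq_zero hwj)
    exact ⟨z, hz, (abs_sub_le s (j * q) z).trans_lt (by linarith)⟩
  by_cases hk : w k = 0
  · exact hnode k (by rw [abs_le]; constructor <;> linarith [hk₁, hk₂]) hk
  by_cases hk' : w (k + 1) = 0
  · exact hnode (k + 1) (by rw [abs_le]; push_cast; constructor <;> linarith [hk₁, hk₂]) hk'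
  obtain ⟨z, hz, hfz⟩ := intermediate_value_uIcc hf.continuousOn
    ((hw k).zero_mem_uIcc (hw (k + 1)) hk hk' hmem)
  push_cast at hz
  rw [uIcc_of_le (by linarith [hk₁, hk₂])] at hz
  exact ⟨z, ⟨(by positivity : (0 : ℝ) ≤ k * q).trans hz.1, hfz⟩, by
    rw [abs_lt]; constructor <;> linarith [hz.1, hz.2, hk₁, hk₂]⟩

end SampledInterpolation

theorem piecewise_affine_rat_dense_CUCZ_general
    (f : ℝ → ℝ) (hf : Continuous f) (hf0 : f 0 = 0)
    (t ρ δ : ℝ) (hρ : 0 < ρ) (hδ : 0 < δ) :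
    ∃ g : ℝ → ℝ, PiecewiseAffineRat g ∧
      dCU t f g < ρ ∧ dCZ t f g < δ ∧
      ((∀ s : ℝ, 0 ≤ s → 0 ≤ f s) → ∀ s : ℝ, 0 ≤ s → 0 ≤ g s) := by
  obtain ⟨ε₀, hε₀, hnear⟩ := exists_pos_forall_exists_mem_zeroSet hf hf0 t (half_pos hδ)
  set ε := min (ρ / 3) ε₀
  have hε : 0 < ε := lt_min (by positivity) hε₀
  obtain ⟨η, hη, hosc⟩ := Metric.uniformContinuousOn_iff_le.1
    ((isCompact_Icc (a := 0) (b := t + 1)).uniformContinuousOn_of_continuous hf.continuousOn) ε hε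
  obtain ⟨q, hq, hqlt⟩ := exists_rat_btwn (lt_min (lt_min hη (by positivity : 0 < δ / 8)) one_pos)
  simp only [lt_min_iff] at hqlt
  obtain ⟨⟨hqη, hqδ⟩, hq1⟩ := hqlt
  obtain ⟨N, hN⟩ := exists_nat_gt (t / q)
  have htN : t < N * q := (div_lt_iff₀ hq).1 hN
  replace hosc : ∀ x ∈ Icc 0 (t + 1), ∀ y ∈ Icc 0 (t + 1), dist x y ≤ q → dist (f x) (f y) ≤ ε :=
    fun x hx y hy hxy => hosc x hx y hy (hxy.trans hqη.le)
  choose w hw using fun k : ℕ => IsSignRounding.exists_rat hε (f (k * q))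
  have hw0 : w 0 = 0 := by exact_mod_cast (hw 0).eq_zero_of_abs_le (by simpa [hf0] using hε.le)
  refine ⟨gridInterp q (fun k => w k) N, piecewiseAffineRat_gridInterp (by exact_mod_cast hq) hw0 N,
    ?_, ?_, fun hfpos s hs =>
      gridInterp_nonneg hq (fun k => (hw k).nonneg (hfpos _ (by positivity))) hs⟩
  · calc dCU t f _ ≤ 2 * ε :=
          dCU_le (by positivity) fun s hs => abs_sub_gridInterp_le hq htN hosc hw hq1.le hs
      _ < ρ := by linarith [min_le_left (ρ / 3) ε₀]
  · calc dCZ t f _ ≤ 3 * δ / 4 := dCZ_le (by positivity)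
          (fun s hs0 hst hfs => (exists_mem_zeroSet_gridInterp_near hq htN hosc hw hs0 (by linarith)
            hfs).imp fun z hz => ⟨hz.1, by linarith [hz.2]⟩)
          (fun s hs0 hst hgs => (exists_mem_zeroSet_near_of_gridInterp_eq_zero hq htN hw hf
            (half_pos hδ) (fun y hy hfy => hnear y hy (hfy.trans (min_le_right _ _))) hs0
            (by linarith) hgs).imp fun z hz => ⟨hz.1, by linarith [hz.2]⟩)
      _ < δ := by linarith

/-- piecewise affine continuous functions vanishing at `0`, with rational
breakpoints and rational values there, are dense in `𝐖` for the CUCZ topology; and for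
nonnegative paths the approximant can be chosen nonnegative. -/
theorem piecewise_affine_rat_dense_CUCZ
    (f : ℝ → ℝ) (hf : Continuous f) (hf0 : f 0 = 0)
    (t ρ δ : ℝ) (ht : 0 < t) (hρ : 0 < ρ) (hδ : 0 < δ) :
    ∃ g : ℝ → ℝ, PiecewiseAffineRat g ∧
      dCU t f g < ρ ∧ dCZ t f g < δ ∧
      ((∀ s : ℝ, 0 ≤ s → 0 ≤ f s) → ∀ s : ℝ, 0 ≤ s → 0 ≤ g s) :=
  piecewise_affine_rat_dense_CUCZ_general f hf hf0 t ρ δ hρ hδ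
end

section
/- Let f ∈ 𝐖, t, ρ, δ > 0 with Osc_{[0,t]}(f,δ) ≤ ρ, and let r ∈ 𝐖₊ satisfy d_t^{CU}(|f|, r) < ρ and d_t^{CZ}(|f|, r) < δ. If s₁ < s₂ in [0,t] are such that f(s₁) and f(s₂) have opposite signs and |f(s₁)|, |f(s₂)| > ρ, then r has a zero in ]s₁, s₂[. -/
open MeasureTheory

/-- The oscillation (modulus of continuity) of `f` on `[0,t]` at scale `δ`. -/
noncomputable def oscOn (f : ℝ → ℝ) (t δ : ℝ) : ℝ :=
  sSup ((fun p : ℝ × ℝ => |f p.1 - f p.2|) ''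
    {p : ℝ × ℝ | p.1 ∈ Set.Icc 0 t ∧ p.2 ∈ Set.Icc 0 t ∧ |p.1 - p.2| ≤ δ})

/-- if `r ∈ 𝐖₊` approximates `|f|` in the CUCZ sense
(`dCU t |f| r < ρ`, `dCZ t |f| r < δ`, with `Osc_{[0,t]}(f,δ) ≤ ρ`), and `f` takes values
of opposite signs, both of absolute value `> ρ`, at `s₁ < s₂` in `[0,t]`, then `r`
vanishes somewhere in `]s₁,s₂[`. -/
theorem approximant_of_abs_has_zero_between_sign_changes
    (f r : ℝ → ℝ)
    (hf : Continuous f) (hf0 : f 0 = 0)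
    (hr : Continuous r) (hr0 : r 0 = 0) (hrpos : ∀ s, 0 ≤ s → 0 ≤ r s)
    (t ρ δ : ℝ) (ht : 0 < t) (hρ : 0 < ρ) (hδ : 0 < δ)
    (hosc : oscOn f t δ ≤ ρ)
    (hCU : dCU t (fun s => |f s|) r < ρ)
    (hCZ : dCZ t (fun s => |f s|) r < δ)
    (s₁ s₂ : ℝ) (hs₁ : s₁ ∈ Set.Icc 0 t) (hs₂ : s₂ ∈ Set.Icc 0 t) (h12 : s₁ < s₂)
    (hsign : f s₁ * f s₂ < 0)
    (h₁ : ρ < |f s₁|) (h₂ : ρ < |f s₂|) :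
    ∃ z : ℝ, s₁ < z ∧ z < s₂ ∧ r z = 0 := by
  -- a zero of f strictly between s₁ and s₂
  obtain ⟨c, hc, hfc⟩ : ∃ c ∈ Set.Ioo s₁ s₂, f c = 0 := by
    rcases mul_neg_iff.mp hsign with ⟨h1, h2⟩ | ⟨h1, h2⟩
    · have := intermediate_value_Ioo' h12.le hf.continuousOn (a := s₁) (b := s₂)
      have h0 : (0:ℝ) ∈ Set.Ioo (f s₂) (f s₁) := ⟨h2, h1⟩
      obtain ⟨c, hc, hfc⟩ := this h0
      exact ⟨c, hc, hfc⟩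
    · have := intermediate_value_Ioo h12.le hf.continuousOn (a := s₁) (b := s₂)
      have h0 : (0:ℝ) ∈ Set.Ioo (f s₁) (f s₂) := ⟨h1, h2⟩
      obtain ⟨c, hc, hfc⟩ := this h0
      exact ⟨c, hc, hfc⟩
  have hcI : c ∈ Set.Icc 0 t := ⟨hs₁.1.trans hc.1.le, hc.2.le.trans hs₂.2⟩
  -- oscillation bound on individual pairs
  obtain ⟨M, hM⟩ : ∃ M, ∀ x ∈ Set.Icc (0:ℝ) t, ‖f x‖ ≤ M :=
    (isCompact_Icc).exists_bound_of_continuousOn hf.continuousOn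
  have hbdd : BddAbove ((fun p : ℝ × ℝ => |f p.1 - f p.2|) ''
      {p : ℝ × ℝ | p.1 ∈ Set.Icc 0 t ∧ p.2 ∈ Set.Icc 0 t ∧ |p.1 - p.2| ≤ δ}) := by
    refine ⟨2 * M, ?_⟩
    rintro x ⟨⟨a, b⟩, ⟨ha, hb, _⟩, rfl⟩
    calc |f a - f b| ≤ |f a| + |f b| := abs_sub _ _
      _ ≤ M + M := add_le_add (hM a ha) (hM b hb)
      _ = 2 * M := by ring
  have osc_pair : ∀ a ∈ Set.Icc (0:ℝ) t, ∀ b ∈ Set.Icc (0:ℝ) t, |a - b| ≤ δ →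
      |f a - f b| ≤ ρ := by
    intro a ha b hb hab
    refine le_trans ?_ hosc
    exact le_csSup hbdd ⟨(a, b), ⟨ha, hb, hab⟩, rfl⟩
  -- c is far from s₁ and s₂
  have hc1 : s₁ + δ < c := by
    by_contra h
    push_neg at h
    have : |f c - f s₁| ≤ ρ := osc_pair c hcI s₁ hs₁ (by
      rw [abs_sub_le_iff]; constructor <;> linarith [hc.1])
    rw [hfc] at this
    rw [abs_sub_comm] at this
    simp only [sub_zero] at this
    linarith
  have hc2 : c < s₂ - δ := by
    by_contra h
    push_neg at h
    have : |f c - f s₂| ≤ ρ := osc_pair c hcI s₂ hs₂ (by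
      rw [abs_sub_le_iff]; constructor <;> linarith [hc.2])
    rw [hfc] at this
    rw [abs_sub_comm] at this
    simp only [sub_zero] at this
    linarith
  -- extract δ' < δ from dCZ
  set S := {δ : ℝ | 0 < δ ∧
    (∀ s, 0 ≤ s → s ≤ t - δ → |f s| = 0 → ∃ z ∈ zeroSet r, |s - z| < δ) ∧
    (∀ s, 0 ≤ s → s ≤ t - δ → r s = 0 → ∃ z ∈ zeroSet (fun s => |f s|), |s - z| < δ)} with hS
  have hSne : S.Nonempty := by
    refine ⟨t + 1, by linarith, ?_, ?_⟩ <;> intro s hs hs' _ <;> linarith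
  have hSbdd : BddBelow S := ⟨0, fun x hx => hx.1.le⟩
  have hCZ' : sInf S < δ := by
    have : dCZ t (fun s => |f s|) r = sInf S := rfl
    linarith [hCZ, this ▸ hCZ]
  obtain ⟨δ', hδ'S, hδ'lt⟩ := (csInf_lt_iff hSbdd hSne).mp hCZ'
  obtain ⟨hδ'pos, hfw, _⟩ := hδ'S
  obtain ⟨z, hz, hcz⟩ := hfw c (hcI.1) (by linarith [hs₂.2]) (by simp [hfc])
  rw [abs_sub_lt_iff] at hcz
  exact ⟨z, by linarith [hcz.1, hcz.2], by linarith [hcz.1, hcz.2], hz.2⟩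
end

section
/- Let w₀ ∈ 𝐖 be such that for every z ∈ N(w₀) = {t : w₀(t) = min_{[0,t]} w₀} and every δ > 0, one has w̲₀(z−δ) > w̲₀(z+δ) (with w̲₀(t) = 0 for t < 0), where w̲₀ is the running minimum. Then the map w ↦ w − w̲ is continuous at w₀ from 𝐖 with the topology of uniform convergence on compacts to 𝐖₊ with the CUCZ topology. -/
open MeasureTheory

/-- The running minimum `w̲(t) = min_{0 ≤ s ≤ t} w(s)`, with the convention
`w̲(t) = 0` for `t < 0`. -/
noncomputable def runMinE (w : ℝ → ℝ) (t : ℝ) : ℝ :=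
  if t < 0 then 0 else sInf (w '' Set.Icc 0 t)

lemma runMinE_of_nonneg (w : ℝ → ℝ) {t : ℝ} (ht : 0 ≤ t) :
    runMinE w t = sInf (w '' Set.Icc 0 t) := by
  simp [runMinE, not_lt.2 ht]

lemma runMinE_zero (w : ℝ → ℝ) : runMinE w 0 = w 0 := by
  simp [runMinE]

lemma exists_runMin (w : ℝ → ℝ) (hw : Continuous w) {t : ℝ} (ht : 0 ≤ t) :
    ∃ u ∈ Set.Icc 0 t, runMinE w t = w u ∧ ∀ v ∈ Set.Icc 0 t, w u ≤ w v := by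
  obtain ⟨u, hu, hmin⟩ := (isCompact_Icc : IsCompact (Set.Icc (0:ℝ) t)).exists_isMinOn
    ⟨0, le_refl _, ht⟩ hw.continuousOn
  have hmin' : ∀ v ∈ Set.Icc 0 t, w u ≤ w v := fun v hv => (isMinOn_iff.mp hmin) v hv
  refine ⟨u, hu, ?_, hmin'⟩
  rw [runMinE_of_nonneg w ht]
  apply le_antisymm
  · exact csInf_le (isCompact_Icc.image hw).bddBelow ⟨u, hu, rfl⟩
  · exact le_csInf ⟨w u, u, hu, rfl⟩ (by rintro x ⟨v, hv, rfl⟩; exact hmin' v hv)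

lemma runMinE_le (w : ℝ → ℝ) (hw : Continuous w) {t v : ℝ} (ht : 0 ≤ t)
    (hv : v ∈ Set.Icc 0 t) : runMinE w t ≤ w v := by
  rw [runMinE_of_nonneg w ht]
  exact csInf_le (isCompact_Icc.image hw).bddBelow ⟨v, hv, rfl⟩

lemma runMinE_antitone (w : ℝ → ℝ) (hw : Continuous w) {a b : ℝ} (ha : 0 ≤ a)
    (hab : a ≤ b) : runMinE w b ≤ runMinE w a := by
  rw [runMinE_of_nonneg w ha]
  refine le_csInf ⟨w a, a, ⟨ha, le_refl a⟩, rfl⟩ ?_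
  rintro x ⟨v, hv, rfl⟩
  exact runMinE_le w hw (ha.trans hab) ⟨hv.1, hv.2.trans hab⟩

lemma runMinE_close {w₀ w : ℝ → ℝ} (hw₀ : Continuous w₀) (hw : Continuous w)
    {T η : ℝ} (h : ∀ u ∈ Set.Icc 0 T, |w₀ u - w u| ≤ η)
    {s : ℝ} (hs : s ∈ Set.Icc 0 T) : |runMinE w₀ s - runMinE w s| ≤ η := by
  obtain ⟨u₀, hu₀, hval₀, hmin₀⟩ := exists_runMin w₀ hw₀ hs.1
  obtain ⟨u, hu, hval, hmin⟩ := exists_runMin w hw hs.1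
  have hu₀T : u₀ ∈ Set.Icc 0 T := ⟨hu₀.1, hu₀.2.trans hs.2⟩
  have huT : u ∈ Set.Icc 0 T := ⟨hu.1, hu.2.trans hs.2⟩
  have h1 := abs_le.mp (h u₀ hu₀T)
  have h2 := abs_le.mp (h u huT)
  have h3 := hmin₀ u hu
  have h4 := hmin u₀ hu₀
  rw [abs_le]
  constructor <;> [nlinarith [hval₀, hval]; nlinarith [hval₀, hval]]

lemma runMinE_diff_le (w : ℝ → ℝ) (hw : Continuous w) {a b ε : ℝ} (ha : 0 ≤ a)
    (hab : a ≤ b) (hε : 0 ≤ ε) (h : ∀ u ∈ Set.Icc a b, w a ≤ w u + ε) :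
    runMinE w a ≤ runMinE w b + ε := by
  obtain ⟨u, hu, hval, hmin⟩ := exists_runMin w hw (ha.trans hab)
  rcases le_or_gt u a with hua | hua
  · have : runMinE w a ≤ w u := runMinE_le w hw ha ⟨hu.1, hua⟩
    linarith [hval]
  · have h1 : runMinE w a ≤ w a := runMinE_le w hw ha ⟨ha, le_refl a⟩
    have h2 : w a ≤ w u + ε := h u ⟨le_of_lt hua, hu.2⟩
    linarith [hval]

lemma runMinE_continuous (w : ℝ → ℝ) (hw : Continuous w) (hw0 : w 0 = 0) :
    Continuous (runMinE w) := by
  have hcont : ContinuousOn (runMinE w) (Set.Ici 0) := by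
    intro t₀ ht₀
    rw [Metric.continuousWithinAt_iff]
    intro ε hε
    have hK : IsCompact (Set.Icc (0:ℝ) (t₀ + 1)) := isCompact_Icc
    have huc := hK.uniformContinuousOn_of_continuous hw.continuousOn
    obtain ⟨θ, hθ, hmod⟩ := Metric.uniformContinuousOn_iff.mp huc (ε/2) (by linarith)
    refine ⟨min θ 1, by positivity, ?_⟩
    intro y hy hdist
    have hy0 : (0:ℝ) ≤ y := hy
    have ht₀0 : (0:ℝ) ≤ t₀ := ht₀
    have hdy : |y - t₀| < min θ 1 := by rwa [Real.dist_eq] at hdist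
    have key : ∀ c d : ℝ, 0 ≤ c → c ≤ d → d ≤ t₀ + 1 → d - c < θ →
        runMinE w c ≤ runMinE w d + ε/2 := by
      intro c d hc hcd hd1 hdc
      refine runMinE_diff_le w hw hc hcd (by linarith) ?_
      intro u hu
      have h1 : c ∈ Set.Icc (0:ℝ) (t₀+1) := ⟨hc, by linarith [hu.1, hu.2]⟩
      have h2 : u ∈ Set.Icc (0:ℝ) (t₀+1) := ⟨hc.trans hu.1, hu.2.trans hd1⟩
      have h3 : dist c u < θ := by
        rw [Real.dist_eq, abs_sub_comm, abs_of_nonneg (by linarith [hu.1])]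
        linarith [hu.2]
      have := hmod c h1 u h2 h3
      rw [Real.dist_eq] at this
      have := abs_le.mp this.le
      linarith [this.1]
    rw [Real.dist_eq]
    rcases le_total y t₀ with hyt | hyt
    · have h1 : runMinE w t₀ ≤ runMinE w y :=
        runMinE_antitone w hw hy0 hyt
      have h2 : runMinE w y ≤ runMinE w t₀ + ε/2 := by
        refine key y t₀ hy0 hyt (by linarith) ?_
        have := abs_le.mp hdy.le
        calc t₀ - y ≤ |y - t₀| := by rw [abs_sub_comm]; exact le_abs_self _
        _ < min θ 1 := hdy
        _ ≤ θ := min_le_left _ _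
      rw [abs_lt]; constructor <;> linarith
    · have h1 : runMinE w y ≤ runMinE w t₀ :=
        runMinE_antitone w hw ht₀0 hyt
      have h2 : runMinE w t₀ ≤ runMinE w y + ε/2 := by
        refine key t₀ y ht₀0 hyt ?_ ?_
        · have : y - t₀ < 1 := lt_of_le_of_lt (le_abs_self _) (hdy.trans_le (min_le_right _ _))
          linarith
        · calc y - t₀ ≤ |y - t₀| := le_abs_self _
          _ < min θ 1 := hdy
          _ ≤ θ := min_le_left _ _
      rw [abs_lt]; constructor <;> linarith
  have heq : runMinE w = (runMinE w) ∘ (fun t => max t 0) := by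
    funext t
    rcases lt_or_ge t 0 with ht | ht
    · simp only [Function.comp_apply, max_eq_right ht.le]
      rw [runMinE_zero w, hw0]
      simp [runMinE, ht]
    · simp [Function.comp_apply, max_eq_left ht]
  rw [heq]
  exact hcont.comp_continuous (continuous_id.max continuous_const) (fun x => le_max_right x 0)

/-- if `w₀` satisfies `w̲₀(z-δ) > w̲₀(z+δ)` at every running-minimum
record time `z` and every `δ > 0`, then `w ↦ w - w̲` is continuous at `w₀`, from the
topology of uniform convergence on compacts to the CUCZ topology. -/
theorem sub_runMin_continuous_at
    (w₀ : ℝ → ℝ) (hw₀ : Continuous w₀) (hw₀0 : w₀ 0 = 0)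
    (hrec : ∀ z : ℝ, 0 ≤ z → w₀ z = runMinE w₀ z →
      ∀ δ : ℝ, 0 < δ → runMinE w₀ (z + δ) < runMinE w₀ (z - δ)) :
    ∀ t ρ δ : ℝ, 0 < t → 0 < ρ → 0 < δ →
      ∃ T η : ℝ, 0 < T ∧ 0 < η ∧
        ∀ w : ℝ → ℝ, Continuous w → w 0 = 0 → dCU T w₀ w < η →
          dCU t (fun s => w₀ s - runMinE w₀ s) (fun s => w s - runMinE w s) < ρ ∧
          dCZ t (fun s => w₀ s - runMinE w₀ s) (fun s => w s - runMinE w s) < δ := by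
  intro t ρ δ ht hρ hδ
  set m₀ := runMinE w₀ with hm₀def
  have hm₀cont : Continuous m₀ := runMinE_continuous w₀ hw₀ hw₀0
  set f : ℝ → ℝ := fun s => w₀ s - m₀ s with hfdef
  have hfcont : Continuous f := hw₀.sub hm₀cont
  set δ' : ℝ := min (δ/2) 1 with hδ'def
  have hδ'pos : 0 < δ' := lt_min (by linarith) one_pos
  have hδ'δ : δ' < δ := lt_of_le_of_lt (min_le_left _ _) (by linarith)
  set T : ℝ := t + 2 with hTdef
  have htT : t ≤ T := by rw [hTdef]; linarith
  have hT0 : 0 ≤ T := by linarith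
  -- the record set
  set N : Set ℝ := zeroSet f with hNdef
  have hNclosed : IsClosed N := by
    have : N = Set.Ici 0 ∩ f ⁻¹' {0} := by
      ext x
      simp only [hNdef, zeroSet, Set.mem_setOf_eq, Set.mem_inter_iff, Set.mem_Ici,
        Set.mem_preimage, Set.mem_singleton_iff]
    rw [this]
    exact isClosed_Ici.inter (isClosed_singleton.preimage hfcont)
  have hzeroN : (0:ℝ) ∈ N := by
    refine ⟨le_refl 0, ?_⟩
    simp [hfdef, hm₀def, runMinE_zero, hw₀0]
  -- the gap function
  set φ : ℝ → ℝ := fun s => m₀ (s - δ'/2) - m₀ (s + δ'/2) with hφdef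
  have hφcont : Continuous φ :=
    (hm₀cont.comp (continuous_id.sub continuous_const)).sub
      (hm₀cont.comp (continuous_id.add continuous_const))
  set S₁ : Set ℝ := N ∩ Set.Icc 0 t with hS₁def
  have hS₁cpt : IsCompact S₁ := isCompact_Icc.inter_left hNclosed
  have hS₁ne : S₁.Nonempty := ⟨0, hzeroN, le_refl 0, ht.le⟩
  obtain ⟨z₁, hz₁, hz₁min⟩ := hS₁cpt.exists_isMinOn hS₁ne hφcont.continuousOn
  have hφpos : ∀ z ∈ S₁, 0 < φ z := by
    intro z hz
    have hzN : z ∈ N := hz.1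
    have hzrec : w₀ z = m₀ z := by
      have h0 := hzN.2
      simp only [hfdef] at h0
      linarith
    have := hrec z hzN.1 hzrec (δ'/2) (by linarith)
    simp only [hφdef]
    linarith
  obtain ⟨ε₁, hε₁pos, hε₁min⟩ : ∃ e, 0 < e ∧ ∀ z ∈ S₁, e ≤ φ z :=
    ⟨φ z₁, hφpos z₁ hz₁, fun z hz => (isMinOn_iff.mp hz₁min) z hz⟩
  -- the far-from-record set
  set K : Set ℝ := Set.Icc 0 t ∩ {u : ℝ | ∀ z ∈ N, δ' ≤ |u - z|} with hKdef
  have hKcpt : IsCompact K := by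
    apply IsCompact.inter_right isCompact_Icc
    have : {u : ℝ | ∀ z ∈ N, δ' ≤ |u - z|} = ⋂ z ∈ N, {u : ℝ | δ' ≤ |u - z|} := by
      ext x; simp
    rw [this]
    exact isClosed_biInter fun z _ =>
      isClosed_le continuous_const (continuous_id.sub continuous_const).abs
  have hfposK : ∀ u ∈ K, 0 < f u := by
    intro u hu
    have hu0 : 0 ≤ u := hu.1.1
    have huN : u ∉ N := by
      intro huN
      have := hu.2 u huN
      simp at this
      linarith
    have hle : m₀ u ≤ w₀ u := runMinE_le w₀ hw₀ hu0 ⟨hu0, le_refl u⟩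
    rcases lt_or_eq_of_le hle with h | h
    · simpa [hfdef] using h
    · exact absurd ⟨hu0, by simp [hfdef, h]⟩ huN
  obtain ⟨ε₂, hε₂pos, hε₂min⟩ : ∃ ε₂, 0 < ε₂ ∧ ∀ u ∈ K, ε₂ ≤ f u := by
    rcases K.eq_empty_or_nonempty with hKe | hKne
    · exact ⟨1, one_pos, by simp [hKe]⟩
    · obtain ⟨u₂, hu₂, hu₂min⟩ := hKcpt.exists_isMinOn hKne hfcont.continuousOn
      exact ⟨f u₂, hfposK u₂ hu₂, fun u hu => (isMinOn_iff.mp hu₂min) u hu⟩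
  obtain ⟨η, hηpos, hηρ, hηε₁, hηε₂⟩ :
      ∃ e, 0 < e ∧ e ≤ ρ/3 ∧ e ≤ ε₁/3 ∧ e ≤ ε₂/3 :=
    ⟨min (min (ρ/3) (ε₁/3)) (ε₂/3),
      lt_min (lt_min (by linarith) (by linarith)) (by linarith),
      le_trans (min_le_left _ _) (min_le_left _ _),
      le_trans (min_le_left _ _) (min_le_right _ _), min_le_right _ _⟩
  refine ⟨T, η, by linarith, hηpos, ?_⟩
  intro w hw hw0 hdcu
  -- closeness on [0,T]
  have hclose : ∀ u ∈ Set.Icc 0 T, |w₀ u - w u| ≤ η := by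
    intro u hu
    have hmem : |w₀ u - w u| ∈ (fun s => |w₀ s - w s|) '' Set.Icc 0 T := ⟨u, hu, rfl⟩
    have hbdd : BddAbove ((fun s => |w₀ s - w s|) '' Set.Icc 0 T) :=
      (isCompact_Icc.image (hw₀.sub hw).abs).bddAbove
    exact le_of_lt (lt_of_le_of_lt (le_csSup hbdd hmem) hdcu)
  have hmclose : ∀ s ∈ Set.Icc 0 T, |m₀ s - runMinE w s| ≤ η := by
    intro s hs
    exact runMinE_close hw₀ hw hclose hs
  constructor
  · -- dCU bound
    have hsup : dCU t f (fun s => w s - runMinE w s) ≤ 2*η := by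
      apply Real.sSup_le
      · rintro x ⟨s, hs, rfl⟩
        have hsT : s ∈ Set.Icc 0 T := ⟨hs.1, hs.2.trans htT⟩
        have h1 := hclose s hsT
        have h2 := hmclose s hsT
        have h1' := abs_le.mp h1
        have h2' := abs_le.mp h2
        simp only [hfdef]
        rw [abs_le]
        constructor
        · nlinarith [h1'.1, h1'.2, h2'.1, h2'.2]
        · nlinarith [h1'.1, h1'.2, h2'.1, h2'.2]
      · linarith
    calc dCU t f (fun s => w s - runMinE w s) ≤ 2*η := hsup
      _ < ρ := by linarith
  · -- dCZ bound
    have hmem : δ' ∈ {d : ℝ | 0 < d ∧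
        (∀ s, 0 ≤ s → s ≤ t - d → f s = 0 →
          ∃ z ∈ zeroSet (fun s => w s - runMinE w s), |s - z| < d) ∧
        (∀ s, 0 ≤ s → s ≤ t - d → (fun s => w s - runMinE w s) s = 0 →
          ∃ z ∈ zeroSet f, |s - z| < d)} := by
      refine ⟨hδ'pos, ?_, ?_⟩
      · -- direction 1: records of w₀ are near records of w
        intro s hs0 hst hfs
        have hsN : s ∈ N := ⟨hs0, hfs⟩
        have hsS₁ : s ∈ S₁ := ⟨hsN, hs0, by linarith⟩
        have hb0 : (0:ℝ) ≤ s + δ'/2 := by linarith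
        obtain ⟨z, hzIcc, hzval, hzmin⟩ := exists_runMin w hw hb0
        have hz0 : 0 ≤ z := hzIcc.1
        have hgz : w z - runMinE w z = 0 := by
          have h1 : runMinE w z ≤ w z := runMinE_le w hw hz0 ⟨hz0, le_refl z⟩
          have h2 : runMinE w (s + δ'/2) ≤ runMinE w z :=
            runMinE_antitone w hw hz0 hzIcc.2
          linarith [hzval]
        refine ⟨z, ⟨hz0, hgz⟩, ?_⟩
        rw [abs_sub_lt_iff]
        constructor
        · -- s - z < δ'
          by_contra hcon
          push_neg at hcon
          have hzsd : z ≤ s - δ' := by linarith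
          have hsd0 : 0 ≤ s - δ' := hz0.trans hzsd
          have hbT : s + δ'/2 ∈ Set.Icc 0 T := ⟨hb0, by linarith⟩
          have hsdT : s - δ' ∈ Set.Icc 0 T := ⟨hsd0, by linarith⟩
          have c1 : m₀ (s - δ'/2) ≤ m₀ (s - δ') :=
            runMinE_antitone w₀ hw₀ hsd0 (by linarith)
          have c2 : m₀ (s - δ') - runMinE w (s - δ') ≤ η :=
            (abs_le.mp (hmclose _ hsdT)).2
          have c3 : runMinE w (s - δ') ≤ w z :=
            runMinE_le w hw hsd0 ⟨hz0, hzsd⟩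
          have c5 : runMinE w (s + δ'/2) ≤ m₀ (s + δ'/2) + η := by
            have := abs_le.mp (hmclose _ hbT)
            linarith [this.1]
          have c6 : ε₁ ≤ φ s := hε₁min s hsS₁
          simp only [hφdef] at c6
          linarith [hzval]
        · -- z - s < δ'
          have : z ≤ s + δ'/2 := hzIcc.2
          linarith
      · -- direction 2: records of w are near records of w₀
        intro s hs0 hst hgs
        have hsT : s ∈ Set.Icc 0 T := ⟨hs0, by linarith⟩
        have h1 := abs_le.mp (hclose s hsT)
        have h2 := abs_le.mp (hmclose s hsT)
        have hfs : f s ≤ 2*η := by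
          simp only at hgs
          simp only [hfdef]
          linarith [h1.1, h1.2, h2.1, h2.2, sub_eq_zero.mp hgs]
        have hsK : s ∉ K := by
          intro hsK
          have := hε₂min s hsK
          linarith
        have hsIcc : s ∈ Set.Icc 0 t := ⟨hs0, by linarith⟩
        have : ¬ ∀ z ∈ N, δ' ≤ |s - z| := fun h => hsK ⟨hsIcc, h⟩
        push_neg at this
        obtain ⟨z, hzN, hzlt⟩ := this
        exact ⟨z, hzN, hzlt⟩
    have hbdd : BddBelow {d : ℝ | 0 < d ∧
        (∀ s, 0 ≤ s → s ≤ t - d → f s = 0 →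
          ∃ z ∈ zeroSet (fun s => w s - runMinE w s), |s - z| < d) ∧
        (∀ s, 0 ≤ s → s ≤ t - d → (fun s => w s - runMinE w s) s = 0 →
          ∃ z ∈ zeroSet f, |s - z| < d)} :=
      ⟨0, fun x hx => hx.1.le⟩
    calc dCZ t f (fun s => w s - runMinE w s) ≤ δ' := csInf_le hbdd hmem
      _ < δ := hδ'δ
end

section
/- For every w ∈ 𝐖 and every segment [a,b] ⊆ ℝ₊, the amplitude of w̄ − w on [a,b] is at most the amplitude of w on [a,b], where w̄(t) = max_{[0,t]} w is the running maximum and amp_{[a,b]} f = max_{[a,b]} f − min_{[a,b]} f. -/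
open MeasureTheory

/-- The amplitude of `w` on the segment `[a,b]`. -/
noncomputable def amp (w : ℝ → ℝ) (a b : ℝ) : ℝ :=
  sSup (w '' Set.Icc a b) - sInf (w '' Set.Icc a b)

/-- The running maximum `w̄(t) = max_{0 ≤ s ≤ t} w(s)`. -/
noncomputable def runMax (w : ℝ → ℝ) (t : ℝ) : ℝ :=
  sSup (w '' Set.Icc 0 t)

/-!
Write `m ≤ w ≤ M` on `[a,b]` and take `s, t ∈ [a,b]`. Since `w̄` is nondecreasing and `w̄(t)` is
either `w̄(s)` or a maximum of `w` over `[s,t] ⊆ [a,b]`, we have `w̄(t) ≤ max (w̄(s), M)`. In the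
first case `(w̄ - w)(t) - (w̄ - w)(s) ≤ w(s) - w(t) ≤ M - m`; in the second it is at most
`M - w(t) - (w̄(s) - w(s)) ≤ M - m` because `w̄ ≥ w` on `ℝ₊`.
-/

open Set

theorem amp_le_of_forall_sub_le {f : ℝ → ℝ} {a b c : ℝ} (hab : a ≤ b)
    (h : ∀ s ∈ Icc a b, ∀ t ∈ Icc a b, f t - f s ≤ c) : amp f a b ≤ c := by
  have hne : (f '' Icc a b).Nonempty := (nonempty_Icc.2 hab).image f
  rw [amp, sub_le_iff_le_add]
  refine csSup_le hne ?_
  rintro _ ⟨t, ht, rfl⟩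
  have : f t - c ≤ sInf (f '' Icc a b) := by
    refine le_csInf hne ?_
    rintro _ ⟨s, hs, rfl⟩
    linarith [h s hs t ht]
  linarith

section Continuous

variable {w : ℝ → ℝ} (hw : Continuous w)
include hw

theorem le_sSup_image_Icc {a b t : ℝ} (ht : t ∈ Icc a b) : w t ≤ sSup (w '' Icc a b) :=
  le_csSup (isCompact_Icc.bddAbove_image hw.continuousOn) (mem_image_of_mem w ht)

theorem sInf_image_Icc_le {a b t : ℝ} (ht : t ∈ Icc a b) : sInf (w '' Icc a b) ≤ w t :=
  csInf_le (isCompact_Icc.bddBelow_image hw.continuousOn) (mem_image_of_mem w ht)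

theorem le_runMax {t : ℝ} (ht : 0 ≤ t) : w t ≤ runMax w t :=
  le_sSup_image_Icc hw ⟨ht, le_rfl⟩

theorem runMax_monotoneOn : MonotoneOn (runMax w) (Ici 0) := fun _ hs _ _ hst =>
  csSup_le_csSup (isCompact_Icc.bddAbove_image hw.continuousOn)
    ((nonempty_Icc.2 (mem_Ici.1 hs)).image w) (image_mono (Icc_subset_Icc_right hst))

theorem runMax_eq_max {s t : ℝ} (hs : 0 ≤ s) (hst : s ≤ t) :
    runMax w t = max (runMax w s) (sSup (w '' Icc s t)) := by
  rw [runMax, ← Icc_union_Icc_eq_Icc hs hst, image_union]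
  exact csSup_union (isCompact_Icc.bddAbove_image hw.continuousOn)
    ((nonempty_Icc.2 hs).image w) (isCompact_Icc.bddAbove_image hw.continuousOn)
    ((nonempty_Icc.2 hst).image w)

theorem runMax_le_max_sSup_image_Icc {a b s t : ℝ} (ha : 0 ≤ a) (hs : s ∈ Icc a b)
    (ht : t ∈ Icc a b) : runMax w t ≤ max (runMax w s) (sSup (w '' Icc a b)) := by
  have hs0 : 0 ≤ s := ha.trans hs.1
  rcases le_total t s with hts | hst
  · exact le_max_of_le_left
      (runMax_monotoneOn hw (mem_Ici.2 (ha.trans ht.1)) (mem_Ici.2 hs0) hts)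
  · rw [runMax_eq_max hw hs0 hst]
    exact max_le_max le_rfl <| csSup_le_csSup (isCompact_Icc.bddAbove_image hw.continuousOn)
      ((nonempty_Icc.2 hst).image w) (image_mono (Icc_subset_Icc hs.1 ht.2))

theorem runMax_sub_sub_le_amp {a b s t : ℝ} (ha : 0 ≤ a) (hs : s ∈ Icc a b)
    (ht : t ∈ Icc a b) :
    (runMax w t - w t) - (runMax w s - w s) ≤ amp w a b := by
  have hws := le_runMax hw (ha.trans hs.1)
  have hwt := sInf_image_Icc_le hw ht
  rw [amp]
  rcases le_max_iff.1 (runMax_le_max_sSup_image_Icc hw ha hs ht) with h | h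
  · linarith [le_sSup_image_Icc hw hs]
  · linarith

end Continuous

theorem amp_runMax_sub_le_general
    (w : ℝ → ℝ) (hw : Continuous w)
    (a b : ℝ) (ha : 0 ≤ a) (hab : a ≤ b) :
    amp (fun s => runMax w s - w s) a b ≤ amp w a b :=
  amp_le_of_forall_sub_le hab fun _ hs _ ht => runMax_sub_sub_le_amp hw ha hs ht

/-- the amplitude of `w̄ - w` on a segment `[a,b] ⊆ ℝ₊` is at most the
amplitude of `w` on `[a,b]`. -/
theorem amp_runMax_sub_le
    (w : ℝ → ℝ) (hw : Continuous w) (hw0 : w 0 = 0)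
    (a b : ℝ) (ha : 0 ≤ a) (hab : a ≤ b) :
    amp (fun s => runMax w s - w s) a b ≤ amp w a b :=
  amp_runMax_sub_le_general w hw a b ha hab
end

section
/- Let T be a measure-preserving transformation of a probability space (E, ℰ, π), K a regular conditional kernel of X given T(X), and for n ∈ ℕ let A_n = {x ∈ E : K^n(x,G) > 0} for a fixed measurable set G. Then for every n, A_n ⊆ T^{-1}(A_{n+1}) up to a π-null set; in particular the sequence (π(A_n))_{n∈ℕ} is nondecreasing. Moreover, G is 'atteignable' (for every η > 0 there exist n and a probability ν ≪ π with T^n(ν) = π and ν(G) > 1−η) if and only if sup_n π(A_n) = 1. -/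
/-!
Write `A n = {K^n(·, G) > 0}`. The disintegration identity iterates to
`π.map (fun x => (T^[n] x, x)) = π ⊗ₘ K^n`, and whenever `π.map (fun x => (h x, x)) = μ ⊗ₘ κ`,
a.e. `x ∈ B` has `κ (h x) B > 0`. With `h = T`, `κ = K`, `B = A n` this gives
`A n ⊆ T⁻¹ (A (n+1))` a.e., because `K^(n+1)(z, G) > 0` iff `K(z, A n) > 0`. With `h = T^[n]`,
`κ = K^n`, `B = G` it shows that every `ν ≪ π` with `T^[n]_* ν = π` has `ν G ≤ π (A n)`. This bound
is attained by reweighting `π` so that the conditional law of `X` given `T^[n] X = z` becomes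
`K^n(z, ·)` conditioned on `G` whenever `z ∈ A n`.
-/

open MeasureTheory ProbabilityTheory
open scoped ENNReal

instance isMarkovKernel_kpow {E : Type*} [MeasurableSpace E] (K : Kernel E E) [IsMarkovKernel K]
    (n : ℕ) : IsMarkovKernel (kpow K n) := by
  induction n with
  | zero => exact inferInstanceAs (IsMarkovKernel Kernel.id)
  | succ n ih => exact inferInstanceAs (IsMarkovKernel (kpow K n ∘ₖ K))

theorem ProbabilityTheory.Kernel.comp_apply_pos_iff {α β γ : Type*} [MeasurableSpace α]
    [MeasurableSpace β] [MeasurableSpace γ] (η : Kernel β γ) (κ : Kernel α β) (a : α)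
    {G : Set γ} (hG : MeasurableSet G) :
    0 < (η ∘ₖ κ) a G ↔ 0 < κ a {y | 0 < η y G} := by
  rw [Kernel.comp_apply' _ _ _ hG, lintegral_pos_iff_support (η.measurable_coe hG)]
  simp only [Function.support, pos_iff_ne_zero]

theorem MeasureTheory.Measure.map_withDensity_comp {α β : Type*} [MeasurableSpace α]
    [MeasurableSpace β] {π : Measure α} {h : α → β} (hh : Measurable h) {f : β → ℝ≥0∞}
    (hf : Measurable f) : (π.withDensity (f ∘ h)).map h = (π.map h).withDensity f := by
  ext s hs
  rw [Measure.map_apply hh hs, withDensity_apply _ (hh hs), withDensity_apply _ hs,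
    setLIntegral_map hs hf hh, Function.comp_def]

section Graph

variable {α β γ : Type*} [MeasurableSpace α] [MeasurableSpace β] [MeasurableSpace γ]
  {π : Measure α} {μ : Measure β} [SFinite μ] {h : α → β}

theorem lintegral_graph_eq_lintegral_lintegral (hh : Measurable h)
    {κ : Kernel β α} [IsSFiniteKernel κ] (hκ : π.map (fun x => (h x, x)) = μ ⊗ₘ κ)
    {F : β × α → ℝ≥0∞} (hF : Measurable F) :
    ∫⁻ x, F (h x, x) ∂π = ∫⁻ z, ∫⁻ y, F (z, y) ∂κ z ∂μ := by
  rw [← lintegral_map hF (by fun_prop), hκ, Measure.lintegral_compProd hF]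

theorem map_graph_comp_eq_compProd_comp {g : β → γ} (hh : Measurable h) (hg : Measurable g)
    {η : Kernel β α} [IsSFiniteKernel η] {κ : Kernel γ β} [IsSFiniteKernel κ]
    {ρ : Measure γ} [SFinite ρ]
    (hη : π.map (fun x => (h x, x)) = μ ⊗ₘ η) (hκ : μ.map (fun y => (g y, y)) = ρ ⊗ₘ κ) :
    π.map (fun x => (g (h x), x)) = ρ ⊗ₘ (η ∘ₖ κ) := by
  refine Measure.ext_of_lintegral _ fun F hF => ?_
  rw [lintegral_map hF (by fun_prop), Measure.lintegral_compProd hF]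
  calc ∫⁻ x, F (g (h x), x) ∂π = ∫⁻ y, ∫⁻ x, F (g y, x) ∂η y ∂μ :=
        lintegral_graph_eq_lintegral_lintegral hh hη (F := fun p => F (g p.1, p.2)) (by fun_prop)
    _ = ∫⁻ z, ∫⁻ y, ∫⁻ x, F (z, x) ∂η y ∂κ z ∂ρ :=
        lintegral_graph_eq_lintegral_lintegral hg hκ (F := fun p => ∫⁻ x, F (p.1, x) ∂η p.2)
          (Measurable.lintegral_kernel_prod_right' (κ := η.prodMkLeft γ)
            (f := fun q => F (q.1.1, q.2)) (by fun_prop))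
    _ = ∫⁻ z, ∫⁻ x, F (z, x) ∂(η ∘ₖ κ) z ∂ρ := by
        congr with z
        exact (Kernel.lintegral_comp _ _ _ (hF.comp measurable_prodMk_left)).symm

theorem ae_kernel_apply_pos_of_mem (hh : Measurable h)
    {κ : Kernel β α} [IsSFiniteKernel κ] (hκ : π.map (fun x => (h x, x)) = μ ⊗ₘ κ)
    {B : Set α} (hB : MeasurableSet B) :
    ∀ᵐ x ∂π, x ∈ B → 0 < κ (h x) B := by
  have hS : MeasurableSet {p : β × α | p.2 ∈ B → 0 < κ p.1 B} :=
    (measurable_snd hB).imp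
      (measurableSet_lt measurable_const ((κ.measurable_coe hB).comp measurable_fst))
  have : ∀ᵐ p ∂(μ ⊗ₘ κ), p.2 ∈ B → 0 < κ p.1 B := by
    refine (Measure.ae_compProd_iff hS).2 (ae_of_all _ fun z => ?_)
    rcases eq_zero_or_pos (κ z B) with hz | hz
    · exact (measure_eq_zero_iff_ae_notMem.1 hz).mono fun y hy hyB => absurd hyB hy
    · exact ae_of_all _ fun _ _ => hz
  rw [← hκ] at this
  exact ae_of_ae_map (by fun_prop) this

theorem measure_le_measure_kernel_apply_pos (hh : Measurable h)
    {κ : Kernel β α} [IsSFiniteKernel κ] (hκ : π.map (fun x => (h x, x)) = μ ⊗ₘ κ)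
    {ν : Measure α} (hνπ : ν ≪ π) {μ' : Measure β} (hνμ' : ν.map h = μ')
    {G : Set α} (hG : MeasurableSet G) :
    ν G ≤ μ' {z | 0 < κ z G} :=
  calc ν G ≤ ν (h ⁻¹' {z | 0 < κ z G}) :=
        measure_mono_ae (hνπ.ae_le (ae_kernel_apply_pos_of_mem hh hκ hG))
    _ = μ' {z | 0 < κ z G} := by
        rw [← hνμ', Measure.map_apply hh (measurableSet_lt measurable_const (κ.measurable_coe hG))]

theorem map_graph_withDensity_eq_compProd_withDensity (hh : Measurable h)
    {κ : Kernel β α} [IsSFiniteKernel κ] (hκ : π.map (fun x => (h x, x)) = μ ⊗ₘ κ)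
    {f : β → α → ℝ≥0∞} (hf : Measurable (Function.uncurry f))
    [IsSFiniteKernel (κ.withDensity f)] :
    (π.withDensity (Function.uncurry f ∘ fun x => (h x, x))).map (fun x => (h x, x)) =
      μ ⊗ₘ κ.withDensity f := by
  rw [Measure.compProd_withDensity hf, ← hκ]
  exact Measure.map_withDensity_comp (h := fun x => (h x, x)) (by fun_prop) hf

theorem map_eq_of_map_graph_eq_compProd (hh : Measurable h) {ν : Measure α}
    {κ : Kernel β α} [IsMarkovKernel κ] (hν : ν.map (fun x => (h x, x)) = μ ⊗ₘ κ) :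
    ν.map h = μ := by
  rw [← Measure.fst_compProd μ κ, ← hν, Measure.fst, Measure.map_map measurable_fst (by fun_prop)]
  rfl

theorem eq_comp_of_map_graph_eq_compProd (hh : Measurable h) {ν : Measure α}
    {κ : Kernel β α} [IsSFiniteKernel κ] (hν : ν.map (fun x => (h x, x)) = μ ⊗ₘ κ) :
    ν = κ ∘ₘ μ := by
  rw [← Measure.snd_compProd, ← hν, Measure.snd, Measure.map_map measurable_snd (by fun_prop)]
  exact Measure.map_id.symm

end Graph

section Conditioning

variable {α β : Type*} [MeasurableSpace α] [MeasurableSpace β]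

noncomputable def condDensity (κ : Kernel β α) (G : Set α) (z : β) : α → ℝ≥0∞ :=
  if 0 < κ z G then G.indicator fun _ => (κ z G)⁻¹ else 1

variable {κ : Kernel β α} {G : Set α}

theorem measurable_uncurry_condDensity (hG : MeasurableSet G) :
    Measurable (Function.uncurry (condDensity κ G)) := by
  have hκG : Measurable fun p : β × α => κ p.1 G := (κ.measurable_coe hG).comp measurable_fst
  have hA : MeasurableSet {z | 0 < κ z G} := measurableSet_lt measurable_const (κ.measurable_coe hG)
  have : Function.uncurry (condDensity κ G) = fun p => if p.1 ∈ {z | 0 < κ z G} then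
      (Prod.snd ⁻¹' G).indicator (fun p => (κ p.1 G)⁻¹) p else 1 := by
    ext p
    simp only [Function.uncurry, condDensity, Set.mem_ofPred_eq]
    split_ifs <;> rfl
  rw [this]
  exact Measurable.ite (hA.preimage measurable_fst) (hκG.inv.indicator (measurable_snd hG))
    measurable_const

theorem withDensity_condDensity_apply [IsFiniteKernel κ] (hG : MeasurableSet G) (z : β) :
    κ.withDensity (condDensity κ G) z = if 0 < κ z G then (κ z)[|G] else κ z := by
  rw [Kernel.withDensity_apply _ (measurable_uncurry_condDensity hG)]
  by_cases hz : 0 < κ z G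
  · simp only [condDensity, if_pos hz]
    rw [withDensity_indicator hG, withDensity_const]
    rfl
  · simp only [condDensity, if_neg hz]
    exact withDensity_one

theorem isMarkovKernel_withDensity_condDensity [IsMarkovKernel κ] (hG : MeasurableSet G) :
    IsMarkovKernel (κ.withDensity (condDensity κ G)) :=
  ⟨fun z => by
    rw [withDensity_condDensity_apply hG]
    split_ifs with hz
    exacts [cond_isProbabilityMeasure hz.ne', inferInstance]⟩

theorem withDensity_condDensity_apply_self [IsFiniteKernel κ] (hG : MeasurableSet G) (z : β) :
    κ.withDensity (condDensity κ G) z G = {z | 0 < κ z G}.indicator 1 z := by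
  rw [withDensity_condDensity_apply hG]
  split_ifs with hz
  · simp [cond_apply_self hz.ne' (measure_ne_top _ _), hz]
  · simp [nonpos_iff_eq_zero.1 (not_lt.1 hz)]

end Conditioning

theorem exists_absolutelyContinuous_map_eq_measure_eq {α β : Type*} [MeasurableSpace α]
    [MeasurableSpace β] {π : Measure α} {μ : Measure β} [SFinite μ] {h : α → β}
    (hh : Measurable h) {κ : Kernel β α} [IsMarkovKernel κ]
    (hκ : π.map (fun x => (h x, x)) = μ ⊗ₘ κ) {G : Set α} (hG : MeasurableSet G) :
    ∃ ν : Measure α, ν ≪ π ∧ ν.map h = μ ∧ ν G = μ {z | 0 < κ z G} := by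
  have := isMarkovKernel_withDensity_condDensity (κ := κ) hG
  have hν := map_graph_withDensity_eq_compProd_withDensity hh hκ
    (measurable_uncurry_condDensity (κ := κ) hG)
  refine ⟨_, withDensity_absolutelyContinuous _ _, map_eq_of_map_graph_eq_compProd hh hν, ?_⟩
  rw [eq_comp_of_map_graph_eq_compProd hh hν, Measure.bind_apply hG (Kernel.aemeasurable _)]
  simp_rw [withDensity_condDensity_apply_self hG]
  exact lintegral_indicator_one (measurableSet_lt measurable_const (κ.measurable_coe hG))

section Iterate

variable {E : Type*} [MeasurableSpace E] {π : Measure E} {T : E → E}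
  {K : Kernel E E} [IsMarkovKernel K]

theorem map_graph_iterate_eq_compProd_kpow [SFinite π] (hT : Measurable T)
    (hK : π.map (fun x => (T x, x)) = π ⊗ₘ K) (n : ℕ) :
    π.map (fun x => (T^[n] x, x)) = π ⊗ₘ kpow K n := by
  induction n with
  | zero => exact Measure.compProd_id.symm
  | succ n ih =>
    simp_rw [Function.iterate_succ_apply']
    exact map_graph_comp_eq_compProd_comp (hT.iterate n) hT ih hK

theorem ae_kpow_succ_apply_pos {μ : Measure E} [SFinite μ] (hT : Measurable T)
    (hK : π.map (fun x => (T x, x)) = μ ⊗ₘ K) {G : Set E} (hG : MeasurableSet G) (n : ℕ) :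
    ∀ᵐ x ∂π, 0 < kpow K n x G → 0 < kpow K (n + 1) (T x) G := by
  filter_upwards [ae_kernel_apply_pos_of_mem hT hK
    (measurableSet_lt measurable_const ((kpow K n).measurable_coe hG))] with x hx hxG
  exact (Kernel.comp_apply_pos_iff _ _ _ hG).2 (hx hxG)

theorem monotone_measure_kpow_apply_pos [SFinite π] (hT : MeasurePreserving T π π)
    (hK : π.map (fun x => (T x, x)) = π ⊗ₘ K) {G : Set E} (hG : MeasurableSet G) :
    Monotone fun n => π {y | 0 < kpow K n y G} := by
  refine monotone_nat_of_le_succ fun n => ?_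
  calc π {y | 0 < kpow K n y G}
      ≤ π (T ⁻¹' {y | 0 < kpow K (n + 1) y G}) :=
        measure_mono_ae (ae_kpow_succ_apply_pos hT.measurable hK hG n)
    _ = π {y | 0 < kpow K (n + 1) y G} :=
        hT.measure_preimage (measurableSet_lt measurable_const
          ((kpow K (n + 1)).measurable_coe hG)).nullMeasurableSet

end Iterate

theorem attainable_iff_strongly_accessible_general
    {E : Type*} [MeasurableSpace E]
    (π : Measure E) [IsProbabilityMeasure π]
    (T : E → E) (hTm : Measurable T) (hT : MeasurePreserving T π π)
    (K : Kernel E E) [IsMarkovKernel K]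
    (hK : π.map (fun x => (T x, x)) = π ⊗ₘ K)
    (G : Set E) (hG : MeasurableSet G) :
    (∀ n : ℕ, ∀ᵐ x ∂π,
      x ∈ {y : E | 0 < kpow K n y G} → T x ∈ {y : E | 0 < kpow K (n + 1) y G}) ∧
    Monotone (fun n : ℕ => π {y : E | 0 < kpow K n y G}) ∧
    ((∀ η : ℝ≥0∞, 0 < η →
        ∃ (n : ℕ) (ν : Measure E), IsProbabilityMeasure ν ∧ ν ≪ π ∧
          ν.map (T^[n]) = π ∧ 1 - η < ν G) ↔
      (⨆ n : ℕ, π {y : E | 0 < kpow K n y G}) = 1) := by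
  have hKn := map_graph_iterate_eq_compProd_kpow hTm hK
  refine ⟨ae_kpow_succ_apply_pos hTm hK hG, monotone_measure_kpow_apply_pos hT hK hG, ?_, ?_⟩
  · intro hatt
    refine le_antisymm (iSup_le fun _ => prob_le_one) (ENNReal.le_of_forall_pos_le_add ?_)
    intro ε hε _
    obtain ⟨n, ν, -, hνπ, hνT, hνG⟩ := hatt ε (by exact_mod_cast hε)
    calc 1 ≤ ν G + ε := tsub_le_iff_right.1 hνG.le
      _ ≤ (⨆ n, π {y | 0 < kpow K n y G}) + ε := by
        gcongr
        exact (measure_le_measure_kernel_apply_pos (hTm.iterate n) (hKn n) hνπ hνT hG).trans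
          (le_iSup (fun n => π {y | 0 < kpow K n y G}) n)
  · intro hsup η hη
    have h1η : 1 - η < ⨆ n, π {y | 0 < kpow K n y G} := by
      rw [hsup]
      exact ENNReal.sub_lt_self ENNReal.one_ne_top one_ne_zero hη.ne'
    obtain ⟨n, hn⟩ := lt_iSup_iff.1 h1η
    obtain ⟨ν, hνπ, hνT, hνG⟩ := exists_absolutelyContinuous_map_eq_measure_eq (hTm.iterate n)
      (hKn n) hG
    have : IsProbabilityMeasure (ν.map (T^[n])) := hνT ▸ inferInstance
    exact ⟨n, ν, Measure.isProbabilityMeasure_of_map (T^[n]), hνπ, hνT, hνG ▸ hn⟩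

/-- with `A n = {x | K^n(x,G) > 0}`, one has `A n ⊆ T⁻¹ (A (n+1))` up to a
π-null set, so `n ↦ π (A n)` is nondecreasing; and `G` is attainable (for every `η > 0`
there are `n` and a probability `ν ≪ π` with `(T^[n])_* ν = π` and `ν G > 1 - η`) iff
`⨆ n, π (A n) = 1`. -/
theorem attainable_iff_strongly_accessible
    {E : Type*} [MeasurableSpace E] [StandardBorelSpace E]
    (π : Measure E) [IsProbabilityMeasure π]
    (T : E → E) (hTm : Measurable T) (hT : MeasurePreserving T π π)
    (K : Kernel E E) [IsMarkovKernel K]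
    (hK : π.map (fun x => (T x, x)) = π ⊗ₘ K)
    (G : Set E) (hG : MeasurableSet G) :
    (∀ n : ℕ, ∀ᵐ x ∂π,
      x ∈ {y : E | 0 < kpow K n y G} → T x ∈ {y : E | 0 < kpow K (n + 1) y G}) ∧
    Monotone (fun n : ℕ => π {y : E | 0 < kpow K n y G}) ∧
    ((∀ η : ℝ≥0∞, 0 < η →
        ∃ (n : ℕ) (ν : Measure E), IsProbabilityMeasure ν ∧ ν ≪ π ∧
          ν.map (T^[n]) = π ∧ 1 - η < ν G) ↔
      (⨆ n : ℕ, π {y : E | 0 < kpow K n y G}) = 1) :=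
  attainable_iff_strongly_accessible_general π T hTm hT K hK G hG
end
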